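/- arXiv:1909.13274 — 6 statements merged into one kernel-verified Lean document; each statement's English description precedes it below -/
import Mathlib

section
/- For every real number a ∈ [0,1) and every positive integer k, one has k!^a / k! ≤ 2 / ⌊(1-a)·k⌋!. -/
/-!
The sequence `(n!)^(1/n)` is nondecreasing, so `m ≤ t·k` with `t ≤ 1` gives
`m! ≤ (k!)^(m/k) ≤ (k!)^t`. With `m = ⌊(1-a)k⌋` and `t = 1 - a` this reads
`k!^a · m! ≤ k!`, which is the claim even without the factor `2`.
-/

open Nat Real

theorem Nat.factorial_pow_le_factorial_pow {m k : ℕ} (h : m ≤ k) : m ! ^ k ≤ k ! ^ m := by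
  induction k with
  | zero => simp [Nat.le_zero.1 h]
  | succ n ih =>
    rcases h.eq_or_lt with rfl | hlt
    · rfl
    · have hm : m ! ≤ (n + 1) ^ m :=
        (m.factorial_le_pow).trans (Nat.pow_le_pow_left (by omega) m)
      calc m ! ^ (n + 1) = m ! ^ n * m ! := pow_succ _ _
        _ ≤ n ! ^ m * (n + 1) ^ m := Nat.mul_le_mul (ih (by omega)) hm
        _ = (n + 1)! ^ m := by rw [Nat.factorial_succ, mul_pow, mul_comm]

theorem Nat.factorial_le_factorial_rpow {m k : ℕ} {t : ℝ} (ht : t ≤ 1) (hm : (m : ℝ) ≤ t * k) :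
    (m ! : ℝ) ≤ (k ! : ℝ) ^ t := by
  rcases k.eq_zero_or_pos with rfl | hk
  · obtain rfl : m = 0 := by
      have : (m : ℝ) ≤ 0 := by simpa using hm
      exact_mod_cast this.antisymm m.cast_nonneg
    simp
  have hk' : (0 : ℝ) < k := by exact_mod_cast hk
  have hmk : m ≤ k := by
    have : (m : ℝ) ≤ k := hm.trans (by nlinarith)
    exact_mod_cast this
  have hk1 : (1 : ℝ) ≤ k ! := by exact_mod_cast k.factorial_pos
  calc (m ! : ℝ) = ((m ! : ℝ) ^ k) ^ (k⁻¹ : ℝ) := (pow_rpow_inv_natCast (by positivity) hk.ne').symm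
    _ ≤ ((k ! : ℝ) ^ m) ^ (k⁻¹ : ℝ) := by
      gcongr
      exact_mod_cast factorial_pow_le_factorial_pow hmk
    _ = (k ! : ℝ) ^ ((m : ℝ) / k) := by
      rw [← rpow_natCast, ← rpow_mul (by positivity), div_eq_mul_inv]
    _ ≤ (k ! : ℝ) ^ t := rpow_le_rpow_of_exponent_le hk1 ((div_le_iff₀ hk').2 hm)

theorem stmt_0_general (a : ℝ) (ha0 : 0 ≤ a) (ha1 : a < 1) (k : ℕ) :
    (k.factorial : ℝ) ^ a / (k.factorial : ℝ)
      ≤ 2 / ((Nat.floor ((1 - a) * (k : ℝ))).factorial : ℝ) := by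
  set m := Nat.floor ((1 - a) * (k : ℝ))
  have hm : (m : ℝ) ≤ (1 - a) * k := Nat.floor_le (mul_nonneg (by linarith) k.cast_nonneg)
  have hmk : (m ! : ℝ) ≤ (k ! : ℝ) ^ (1 - a) := factorial_le_factorial_rpow (by linarith) hm
  have hk : (0 : ℝ) < k ! := by positivity
  rw [div_le_div_iff₀ hk (by positivity)]
  calc (k ! : ℝ) ^ a * m ! ≤ (k ! : ℝ) ^ a * (k ! : ℝ) ^ (1 - a) := by gcongr
    _ = k ! := by rw [← rpow_add hk]; simp
    _ ≤ 2 * k ! := by linarith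

/-- For every real `a ∈ [0,1)` and every positive integer `k`,
`k!^a / k! ≤ 2 / ⌊(1-a)·k⌋!`. -/
theorem stmt_0 (a : ℝ) (ha0 : 0 ≤ a) (ha1 : a < 1) (k : ℕ) (hk : 1 ≤ k) :
    (k.factorial : ℝ) ^ a / (k.factorial : ℝ)
      ≤ 2 / ((Nat.floor ((1 - a) * (k : ℝ))).factorial : ℝ) :=
  stmt_0_general a ha0 ha1 k
end

section
/- For every integer ν ≥ 1 and real s > 0, the ν-th Touchard (Bell) polynomial satisfies T_ν(s) ≤ s·(ν + s)^{ν-1}. -/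
/-- Stirling numbers of the second kind. -/
def stirlingSnd : ℕ → ℕ → ℕ
  | 0, 0 => 1
  | 0, _ + 1 => 0
  | _ + 1, 0 => 0
  | n + 1, k + 1 => (k + 1) * stirlingSnd n (k + 1) + stirlingSnd n k

/-- The `ν`-th Touchard polynomial `T_ν(s) = Σ_{k=1}^ν S(ν,k) s^k`. -/
noncomputable def touchard (ν : ℕ) (s : ℝ) : ℝ :=
  ∑ k ∈ Finset.Icc 1 ν, (stirlingSnd ν k : ℝ) * s ^ k

/-!
Block minima: a partition of `{0, …, n}` into `k + 1` blocks is determined by which `k` of the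
elements `1, …, n` are the minima of the blocks not containing `0`, and by the block of each of
the remaining `n - k` elements, so `S(n + 1, k + 1) ≤ C(n, k) (k + 1)^(n - k)`. Bounding `k + 1`
by `ν = n + 1` turns the right-hand side, multiplied by `s^(k + 1)` and summed over `k`, into the
binomial expansion of `s (ν + s)^(ν - 1)`.
-/

theorem stirlingSnd_eq_stirlingSecond : stirlingSnd = Nat.stirlingSecond := by
  funext n k
  induction n generalizing k with
  | zero => cases k <;> rfl
  | succ n ih => cases k <;> simp [stirlingSnd, Nat.stirlingSecond_succ_succ, ih]

theorem Nat.stirlingSecond_succ_succ_le_choose_mul_pow (n k : ℕ) :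
    stirlingSecond (n + 1) (k + 1) ≤ n.choose k * (k + 1) ^ (n - k) := by
  induction n generalizing k with
  | zero => cases k <;> simp [stirlingSecond_one_right, stirlingSecond_eq_zero_of_lt]
  | succ n ih =>
    cases k with
    | zero => simp [stirlingSecond_one_right]
    | succ k =>
      have hmove :
          (k + 2) * stirlingSecond (n + 1) (k + 2) ≤ n.choose (k + 1) * (k + 2) ^ (n - k) := by
        rcases Nat.lt_or_ge n (k + 1) with hlt | hle
        · simp [stirlingSecond_eq_zero_of_lt (show n + 1 < k + 2 by omega)]
        · calc (k + 2) * stirlingSecond (n + 1) (k + 2)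
              ≤ (k + 2) * (n.choose (k + 1) * (k + 2) ^ (n - (k + 1))) :=
                Nat.mul_le_mul_left _ (ih (k + 1))
            _ = n.choose (k + 1) * (k + 2) ^ (n - k) := by
                rw [show n - k = n - (k + 1) + 1 by omega, pow_succ]; ring
      have hjoin : stirlingSecond (n + 1) (k + 1) ≤ n.choose k * (k + 2) ^ (n - k) :=
        (ih k).trans (Nat.mul_le_mul_left _ (Nat.pow_le_pow_left (by omega) _))
      calc stirlingSecond (n + 1 + 1) (k + 1 + 1)
          = (k + 2) * stirlingSecond (n + 1) (k + 2) + stirlingSecond (n + 1) (k + 1) := rfl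
        _ ≤ n.choose (k + 1) * (k + 2) ^ (n - k) + n.choose k * (k + 2) ^ (n - k) :=
            Nat.add_le_add hmove hjoin
        _ = (n + 1).choose (k + 1) * (k + 1 + 1) ^ (n + 1 - (k + 1)) := by
            rw [Nat.choose_succ_succ, Nat.add_sub_add_right]; ring

theorem touchard_succ_eq_sum_range (m : ℕ) (s : ℝ) :
    touchard (m + 1) s =
      ∑ j ∈ Finset.range (m + 1), (Nat.stirlingSecond (m + 1) (j + 1) : ℝ) * s ^ (j + 1) := by
  rw [touchard, stirlingSnd_eq_stirlingSecond, Finset.range_eq_Ico,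
    Finset.sum_Ico_add' (fun k => (Nat.stirlingSecond (m + 1) k : ℝ) * s ^ k),
    ← Finset.Ico_add_one_right_eq_Icc]

theorem touchard_succ_le (m : ℕ) {s : ℝ} (hs : 0 ≤ s) :
    touchard (m + 1) s ≤ s * ((m + 1 : ℕ) + s) ^ m := by
  rw [touchard_succ_eq_sum_range, add_comm _ s, add_pow, Finset.mul_sum]
  refine Finset.sum_le_sum fun j hj => ?_
  have hjm : j ≤ m := Nat.lt_succ_iff.mp (Finset.mem_range.mp hj)
  calc (Nat.stirlingSecond (m + 1) (j + 1) : ℝ) * s ^ (j + 1)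
      ≤ m.choose j * ((j + 1 : ℕ) : ℝ) ^ (m - j) * s ^ (j + 1) := by
        gcongr
        exact_mod_cast Nat.stirlingSecond_succ_succ_le_choose_mul_pow m j
    _ ≤ m.choose j * ((m + 1 : ℕ) : ℝ) ^ (m - j) * s ^ (j + 1) := by gcongr
    _ = s * (s ^ j * ((m + 1 : ℕ) : ℝ) ^ (m - j) * m.choose j) := by ring

/-- For every integer `ν ≥ 1` and real `s > 0`, `T_ν(s) ≤ s·(ν+s)^{ν-1}`. -/
theorem stmt_2 (ν : ℕ) (hν : 1 ≤ ν) (s : ℝ) (hs : 0 < s) :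
    touchard ν s ≤ s * ((ν : ℝ) + s) ^ (ν - 1) := by
  obtain ⟨m, rfl⟩ := Nat.exists_eq_add_of_le' hν
  simpa using touchard_succ_le m hs.le
end

section
/- For every positive integer p and every real c ≥ 0, the sum over all set partitions Π of {1,…,p} of |Π|!^c · Π_{π∈Π} |π|!^c is at most 2^p · p!^{max{1,c}}. -/
/-!
The weight `|Π|! * ∏ π ∈ Π, |π|!` counts the ways to order the blocks of `Π` and the elements
inside each block. Such a choice lays the ground set out in a row, i.e. a bijection with
`{1,…,p}`, cut into consecutive segments, i.e. a composition of `p`; and it can be read back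
from that pair. Hence the weights sum to at most `2^(p-1) * p!`. Each weight is also at most
`p!`, so with `d = max 1 c` every term `w^c` is at most `w^d ≤ p!^(d-1) * w`, and summing gives
`2^p * p!^d`.
-/

open Finset
open scoped Nat

theorem Nat.factorial_card_mul_prod_factorial_le_factorial_sum {ι : Type*} (s : Finset ι)
    (f : ι → ℕ) (hf : ∀ i ∈ s, 1 ≤ f i) : (#s)! * ∏ i ∈ s, (f i)! ≤ (∑ i ∈ s, f i)! := by
  classical
  induction s using Finset.induction_on with
  | empty => simp
  | insert a s ha ih =>
    set m := ∑ i ∈ s, f i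
    have hm : #s ≤ m := by
      simpa using card_nsmul_le_sum s f 1 fun i hi => hf i (mem_insert_of_mem hi)
    have hchoose : #s + 1 ≤ (f a + m).choose (f a) := calc
      #s + 1 ≤ (m + 1).choose m := by rw [choose_succ_self_right]; omega
      _ ≤ (f a + m).choose m := choose_le_choose m (by have := hf a (mem_insert_self a s); omega)
      _ = (f a + m).choose (f a) := (choose_symm_add).symm
    rw [card_insert_of_notMem ha, prod_insert ha, sum_insert ha]
    calc (#s + 1)! * ((f a)! * ∏ i ∈ s, (f i)!)
        = (#s + 1) * (f a)! * ((#s)! * ∏ i ∈ s, (f i)!) := by rw [factorial_succ]; ring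
      _ ≤ (f a + m).choose (f a) * (f a)! * m ! := by
        gcongr
        exact ih fun i hi => hf i (mem_insert_of_mem hi)
      _ = (f a + m)! := by
        rw [add_comm (f a) m, ← add_choose_mul_factorial_mul_factorial m (f a)]; ring

namespace Finpartition

variable {α : Type*} [DecidableEq α] {s : Finset α}

lemma parts_eq_image_part (P : Finpartition s) : P.parts = s.image P.part := by
  ext t
  simp only [mem_image]
  refine ⟨fun ht => ?_, ?_⟩
  · obtain ⟨x, hx⟩ := P.nonempty_of_mem_parts ht
    exact ⟨x, P.le ht hx, P.part_eq_of_mem ht hx⟩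
  · rintro ⟨x, hx, rfl⟩
    exact P.part_mem.2 hx

lemma ext_of_part_eq_part_iff {P Q : Finpartition s}
    (h : ∀ x ∈ s, ∀ y ∈ s, P.part x = P.part y ↔ Q.part x = Q.part y) : P = Q := by
  have hpart : ∀ x ∈ s, P.part x = Q.part x := fun x hx => by
    ext y
    by_cases hy : y ∈ s
    · rw [P.mem_part_iff_part_eq_part hy hx, Q.mem_part_iff_part_eq_part hy hx, h y hy x hx]
    · exact iff_of_false (fun h => hy (P.part_subset x h)) (fun h => hy (Q.part_subset x h))
  ext1
  rw [parts_eq_image_part, parts_eq_image_part]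
  exact image_congr hpart

abbrev Arrangement (P : Finpartition s) : Type _ :=
  (Fin #P.parts ≃ P.parts) × ((t : P.parts) → Fin #t.1 ≃ t.1)

lemma card_arrangement (P : Finpartition s) :
    Fintype.card P.Arrangement = (#P.parts)! * ∏ t ∈ P.parts, (#t)! := by
  rw [Fintype.card_prod, Fintype.card_equiv P.parts.equivFin.symm, Fintype.card_pi,
    ← prod_coe_sort P.parts fun t => (#t)!]
  simp [Fintype.card_equiv (Finset.equivFin _).symm]

variable {P : Finpartition s}

namespace Arrangement

def composition (a : P.Arrangement) : Composition #s where
  blocks := List.ofFn fun i => #(a.1 i).1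
  blocks_pos := by
    simpa [List.mem_ofFn] using fun i => P.nonempty_of_mem_parts (a.1 i).2
  blocks_sum := by
    rw [List.sum_ofFn, a.1.sum_comp (fun t => #t.1), sum_coe_sort, P.sum_card_parts]

lemma length_composition (a : P.Arrangement) : a.composition.length = #P.parts :=
  List.length_ofFn

lemma blocksFun_composition (a : P.Arrangement) (i : Fin a.composition.length) :
    a.composition.blocksFun i = #(a.1 (i.cast a.length_composition)).1 :=
  List.get_ofFn _ i

def sigmaEquiv (a : P.Arrangement) :
    (Σ t : P.parts, t.1) ≃ Σ i : Fin a.composition.length, Fin (a.composition.blocksFun i) :=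
  Equiv.sigmaCongr (a.1.symm.trans (finCongr a.length_composition.symm))
    fun t => (a.2 t).symm.trans (finCongr (by simp [blocksFun_composition]))

def toEquiv (a : P.Arrangement) : s ≃ Fin #s :=
  P.equivSigmaParts.trans (a.sigmaEquiv.trans a.composition.blocksFinEquiv)

lemma index_toEquiv (a : P.Arrangement) (x : s) :
    (a.composition.index (a.toEquiv x) : ℕ) = a.1.symm (P.equivSigmaParts x).1 := by
  rw [toEquiv, Equiv.trans_apply, Equiv.trans_apply, Composition.blocksFinEquiv,
    Equiv.coe_fn_mk, Composition.index_embedding]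
  rfl

lemma invEmbedding_toEquiv_symm (a : P.Arrangement) (z : Σ t : P.parts, t.1) :
    (a.composition.invEmbedding (a.toEquiv (P.equivSigmaParts.symm z)) : ℕ) =
      (a.2 z.1).symm z.2 := by
  rw [toEquiv, Equiv.trans_apply, Equiv.apply_symm_apply, Equiv.trans_apply,
    Composition.blocksFinEquiv, Equiv.coe_fn_mk, Composition.invEmbedding_comp]
  rfl

lemma part_eq_part_iff (a : P.Arrangement) (x y : s) :
    P.part x = P.part y ↔
      (a.1.symm (P.equivSigmaParts x).1 : ℕ) = a.1.symm (P.equivSigmaParts y).1 := by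
  rw [Fin.val_inj, a.1.symm.injective.eq_iff, Subtype.ext_iff]
  rfl

end Arrangement

/-- From the image `(σ, c)`, the block of `x` is read off as `c.index (σ x)` and its place in
that block as `c.invEmbedding (σ x)`. -/
theorem injective_toEquiv_composition :
    Function.Injective fun x : (Σ P : Finpartition s, P.Arrangement) =>
      (x.2.toEquiv, x.2.composition) := by
  rintro ⟨P, a⟩ ⟨Q, b⟩ h
  obtain ⟨hσ, hc⟩ := Prod.mk.inj h
  have hindex (x : s) :
      (a.1.symm (P.equivSigmaParts x).1 : ℕ) = b.1.symm (Q.equivSigmaParts x).1 := by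
    rw [← a.index_toEquiv, ← b.index_toEquiv, hc, hσ]
  obtain rfl : P = Q := ext_of_part_eq_part_iff fun x hx y hy => by
    rw [a.part_eq_part_iff ⟨x, hx⟩ ⟨y, hy⟩, b.part_eq_part_iff ⟨x, hx⟩ ⟨y, hy⟩, hindex, hindex]
  have hoffset (z : Σ t : P.parts, t.1) : ((a.2 z.1).symm z.2 : ℕ) = (b.2 z.1).symm z.2 := by
    rw [← a.invEmbedding_toEquiv_symm, ← b.invEmbedding_toEquiv_symm, hc, hσ]
  have he : a.1 = b.1 := Equiv.symm_bijective.injective <| Equiv.ext fun t => by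
    obtain ⟨y, hy⟩ := P.nonempty_of_mem_parts t.2
    simpa using Fin.ext (hindex (P.equivSigmaParts.symm ⟨t, y, hy⟩))
  have hf : a.2 = b.2 := funext fun t => Equiv.symm_bijective.injective <| Equiv.ext fun y =>
    Fin.ext (hoffset ⟨t, y⟩)
  rw [Prod.ext he hf]

theorem sum_factorial_card_parts_mul_prod_factorial_le (s : Finset α) :
    ∑ P : Finpartition s, (#P.parts)! * ∏ t ∈ P.parts, (#t)! ≤ 2 ^ (#s - 1) * (#s)! := by
  have := Fintype.card_le_of_injective _ (injective_toEquiv_composition (s := s))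
  simp only [Fintype.card_sigma, card_arrangement] at this
  rwa [Fintype.card_prod, Fintype.card_equiv s.equivFin, Fintype.card_coe,
    composition_card, mul_comm] at this

theorem factorial_card_parts_mul_prod_factorial_le (P : Finpartition s) :
    (#P.parts)! * ∏ t ∈ P.parts, (#t)! ≤ (#s)! := by
  have := Nat.factorial_card_mul_prod_factorial_le_factorial_sum P.parts Finset.card
    fun t ht => card_pos.2 (P.nonempty_of_mem_parts ht)
  rwa [P.sum_card_parts] at this

end Finpartition

theorem Finset.sum_rpow_le_mul_rpow_max_one {ι : Type*} (s : Finset ι) (w : ι → ℝ) {K M : ℝ}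
    (hM : 0 < M) (hw : ∀ i ∈ s, 1 ≤ w i ∧ w i ≤ M) (hsum : ∑ i ∈ s, w i ≤ K * M) (c : ℝ) :
    ∑ i ∈ s, w i ^ c ≤ K * M ^ max 1 c := by
  set d := max 1 c
  have hd : 0 ≤ d - 1 := by simp [d]
  have hterm : ∀ i ∈ s, w i ^ c ≤ M ^ (d - 1) * w i := fun i hi => by
    obtain ⟨hw1, hwM⟩ := hw i hi
    calc w i ^ c ≤ w i ^ d := Real.rpow_le_rpow_of_exponent_le hw1 (le_max_right 1 c)
      _ = w i ^ (d - 1) * w i := by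
        rw [← Real.rpow_add_one (by positivity), sub_add_cancel]
      _ ≤ M ^ (d - 1) * w i := by gcongr
  calc ∑ i ∈ s, w i ^ c ≤ ∑ i ∈ s, M ^ (d - 1) * w i := sum_le_sum hterm
    _ = M ^ (d - 1) * ∑ i ∈ s, w i := (mul_sum _ _ _).symm
    _ ≤ M ^ (d - 1) * (K * M) := by gcongr
    _ = K * M ^ d := by rw [mul_left_comm, ← Real.rpow_add_one hM.ne', sub_add_cancel]

theorem stmt_7_general (p : ℕ) (c : ℝ) :
    ∑ P : Finpartition (Finset.univ : Finset (Fin p)),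
        ((P.parts.card.factorial : ℝ) ^ c * ∏ π ∈ P.parts, ((π.card.factorial : ℝ) ^ c))
      ≤ 2 ^ p * (p.factorial : ℝ) ^ (max 1 c) := by
  have hterm (P : Finpartition (univ : Finset (Fin p))) :
      (P.parts.card.factorial : ℝ) ^ c * ∏ π ∈ P.parts, (π.card.factorial : ℝ) ^ c =
        (((#P.parts)! * ∏ t ∈ P.parts, (#t)! : ℕ) : ℝ) ^ c := by
    push_cast
    rw [Real.finsetProd_rpow _ _ fun _ _ => by positivity,
      Real.mul_rpow (by positivity) (by positivity)]
  simp only [hterm]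
  refine sum_rpow_le_mul_rpow_max_one _ _ (by positivity) (fun P _ => ⟨?_, ?_⟩) ?_ c
  · exact_mod_cast Nat.one_le_iff_ne_zero.2 (by positivity)
  · exact_mod_cast P.factorial_card_parts_mul_prod_factorial_le.trans_eq (by simp)
  · have hsum :=
      Finpartition.sum_factorial_card_parts_mul_prod_factorial_le (univ : Finset (Fin p))
    rw [card_univ, Fintype.card_fin] at hsum
    have hpow : 2 ^ (p - 1) ≤ 2 ^ p := Nat.pow_le_pow_right two_pos (p.sub_le 1)
    exact_mod_cast hsum.trans (Nat.mul_le_mul_right _ hpow)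

/-- For every positive integer `p` and real `c ≥ 0`, the sum over all set
partitions `Π` of `{1,…,p}` of `|Π|!^c · Π_{π∈Π} |π|!^c` is at most
`2^p · p!^{max 1 c}`. -/
theorem stmt_7 (p : ℕ) (hp : 1 ≤ p) (c : ℝ) (hc : 0 ≤ c) :
    ∑ P : Finpartition (Finset.univ : Finset (Fin p)),
        ((P.parts.card.factorial : ℝ) ^ c * ∏ π ∈ P.parts, ((π.card.factorial : ℝ) ^ c))
      ≤ 2 ^ p * (p.factorial : ℝ) ^ (max 1 c) :=
  stmt_7_general p c
end

section
/- The Lebesgue volume of the set {x ∈ (ℝ^d)^{p-1} : ‖x‖_sig ≤ 1} is at most ϑ_d^{p-1} · p^{p-2}, and in particular at most (e·ϑ_d)^{p-1} · p!. -/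
/-!
If `‖x‖_sig ≤ 1` then, putting `x₀ = 0`, every cut of `{0, …, p-1}` separating `0` from some
vertex is crossed by a pair of points at distance at most `1`; Prim's algorithm therefore yields a
spanning tree rooted at `0` all of whose edges have length at most `1`. For a fixed tree with parent
map `f`, the cell `{x : ‖x_i - x_{f i}‖ ≤ 1 for all i}` is the preimage of a product of unit balls
under `1 - N`, where `N x = x ∘ f` is nilpotent; so it has volume `ϑ_d^{p-1}`. There are at most
`p^{p-2}` such trees, by Pitman's double counting of the edge sequences that build a rooted tree
from the empty forest. The second bound follows from `p^p ≤ e^p p!`.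
-/

open MeasureTheory

/-- Distance between two sets of points: the infimum of pairwise distances. -/
noncomputable def setDist {E : Type*} [PseudoMetricSpace E] (A B : Set E) : ℝ :=
  sInf {r | ∃ a ∈ A, ∃ b ∈ B, r = dist a b}

/-- The "sphere of influence" norm of `x = (x_1,…,x_n) ∈ (ℝ^d)^n`:
`‖x‖_sig = max_{I ⊆ {1,…,n}} dist((0, x_I), x_{I^c})`. -/
noncomputable def sigNorm (d n : ℕ) (x : Fin n → EuclideanSpace ℝ (Fin d)) : ℝ :=
  sSup {r | ∃ I : Finset (Fin n), I ≠ Finset.univ ∧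
    r = setDist (insert 0 (x '' ↑I)) (x '' ↑(Iᶜ))}

open Finset Function

section RootedTree

variable {V : Type*}

theorem exists_iterate_eq_of_forall_eq_or {f g : V → V} (h : ∀ v, f v = v ∨ f v = g v)
    (m : ℕ) (v : V) : ∃ k, f^[m] v = g^[k] v := by
  induction m generalizing v with
  | zero => exact ⟨0, rfl⟩
  | succ m ih =>
    rw [iterate_succ_apply]
    rcases h v with hv | hv
    · rw [hv]; exact ih v
    · obtain ⟨k, hk⟩ := ih (g v)
      exact ⟨k + 1, by rw [hv, hk, iterate_succ_apply]⟩

/-- `f` is the parent map of a spanning tree of `V` rooted at `r` (the root is its own parent). -/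
def IsRootedTree (f : V → V) (r : V) : Prop :=
  f r = r ∧ ∀ v, ∃ m, f^[m] v = r

theorem IsRootedTree.eq_of_isPeriodicPt {g : V → V} {r v : V} {k : ℕ} (hg : IsRootedTree g r)
    (hk : 0 < k) (hv : IsPeriodicPt g k v) : v = r := by
  obtain ⟨j, hj⟩ := hg.2 v
  rw [← (hv.mul_const j).eq, ← Nat.sub_add_cancel (Nat.le_mul_of_pos_left j hk),
    iterate_add_apply, hj, iterate_fixed hg.1]

theorem IsRootedTree.conj {f : V → V} {r : V} (hf : IsRootedTree f r) (π : Equiv.Perm V) :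
    IsRootedTree (π ∘ f ∘ π.symm) (π r) := by
  have hπ : Semiconj π f (π ∘ f ∘ π.symm) := fun x => by simp
  refine ⟨by simp [hf.1], fun v => ?_⟩
  obtain ⟨m, hm⟩ := hf.2 (π.symm v)
  exact ⟨m, by rw [← π.apply_symm_apply v, ← (hπ.iterate_right m).eq, hm]⟩

theorem IsRootedTree.exists_iterate_eq_root [Fintype V] {f : V → V} {r : V}
    (hf : IsRootedTree f r) : ∃ K, ∀ v, f^[K] v = r := by
  choose m hm using hf.2
  exact ⟨univ.sup m, fun v => by
    rw [← Nat.sub_add_cancel (le_sup (mem_univ v)), iterate_add_apply, hm, iterate_fixed hf.1]⟩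

end RootedTree

section Forest

variable {V : Type*} [DecidableEq V]

theorem iterate_update_eq_of_forall_lt_ne {f : V → V} {c u v : V} {m : ℕ}
    (h : ∀ j < m, f^[j] v ≠ c) : (update f c u)^[m] v = f^[m] v := by
  induction m generalizing v with
  | zero => rfl
  | succ m ih =>
    have hv : v ≠ c := h 0 m.succ_pos
    rw [iterate_succ_apply, iterate_succ_apply, update_of_ne hv]
    exact ih fun j hj => by simpa only [iterate_succ_apply] using h (j + 1) (by omega)

theorem iterate_update_eq_of_isFixedPt {f : V → V} {c u v : V} {m : ℕ} (hc : IsFixedPt f c)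
    (h : f^[m] v ≠ c) : (update f c u)^[m] v = f^[m] v :=
  iterate_update_eq_of_forall_lt_ne fun j hj hjc => h <| by
    rw [← Nat.sub_add_cancel hj.le, iterate_add_apply, hjc, hc.iterate]

theorem iterate_update_eq_of_not_reach {f : V → V} {r w v u : V} {m : ℕ}
    (hw : ∀ k, f^[k] w ≠ r) (hm : f^[m] u = r) : (update f w v)^[m] u = r := by
  rw [iterate_update_eq_of_forall_lt_ne fun j hj hjw => hw (m - j) ?_, hm]
  rw [← hjw, ← iterate_add_apply, Nat.sub_add_cancel hj.le, hm]

/-- A forest on `V`, encoded by its parent map: roots are the fixed points, and following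
parents from any vertex leads to a root. -/
def IsForest (f : V → V) : Prop :=
  ∀ v, ∃ m, IsFixedPt f (f^[m] v)

theorem IsForest.update {f : V → V} (hf : IsForest f) {c u : V} (hc : IsFixedPt f c)
    (hu : ∀ m, f^[m] u ≠ c) : IsForest (Function.update f c u) := by
  have hfix : ∀ x, x ≠ c → IsFixedPt f x → IsFixedPt (Function.update f c u) x := fun x hx h => by
    rwa [IsFixedPt, Function.update_of_ne hx]
  have hu_root : ∃ k, IsFixedPt (Function.update f c u) ((Function.update f c u)^[k] u) := by
    obtain ⟨k, hk⟩ := hf u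
    exact ⟨k, by rw [iterate_update_eq_of_isFixedPt hc (hu k)]; exact hfix _ (hu k) hk⟩
  intro v
  by_cases hvc : ∃ j, f^[j] v = c
  · obtain ⟨k, hk⟩ := hu_root
    have hj : (Function.update f c u)^[Nat.find hvc] v = c := by
      rw [iterate_update_eq_of_forall_lt_ne fun j hj => Nat.find_min hvc hj, Nat.find_spec hvc]
    refine ⟨k + (Nat.find hvc + 1), ?_⟩
    rwa [iterate_add_apply, iterate_succ_apply', hj, Function.update_self]
  · simp only [not_exists] at hvc
    obtain ⟨m, hm⟩ := hf v
    exact ⟨m, by rw [iterate_update_eq_of_forall_lt_ne fun j _ => hvc j]; exact hfix _ (hvc m) hm⟩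

/-- The parent map of the forest built by the edges `(child, parent)` of `l`, most recent first. -/
def forestOf : List (V × V) → V → V
  | [] => id
  | e :: l => update (forestOf l) e.1 e.2

theorem forestOf_apply_of_notMem {l : List (V × V)} {v : V} (h : v ∉ l.map Prod.fst) :
    forestOf l v = v := by
  induction l with
  | nil => rfl
  | cons e l ih =>
    simp only [List.map_cons, List.mem_cons, not_or] at h
    rw [forestOf, update_of_ne h.1, ih h.2]

theorem forestOf_apply_eq_or {g : V → V} {l : List (V × V)} (hl : ∀ e ∈ l, e.2 = g e.1)
    (v : V) : forestOf l v = v ∨ forestOf l v = g v := by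
  induction l with
  | nil => exact Or.inl rfl
  | cons e l ih =>
    rw [forestOf]
    rcases eq_or_ne v e.1 with rfl | hv
    · exact Or.inr (by rw [update_self, hl e List.mem_cons_self])
    · rw [update_of_ne hv]
      exact ih fun e' he' => hl e' (List.mem_cons_of_mem e he')

variable [Fintype V]

def forestRoots (f : V → V) : Finset V :=
  univ.filter (IsFixedPt f)

theorem forestRoots_update {f : V → V} {c u : V} (hc : IsFixedPt f c) (hu : u ≠ c) :
    forestRoots (update f c u) = (forestRoots f).erase c := by
  ext v
  rcases eq_or_ne v c with rfl | hv
  · simp [forestRoots, IsFixedPt, hu]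
  · simp [forestRoots, IsFixedPt, hv]

open Classical in
/-- The edges `(c, u)` that may be added to the forest `f`: `c` is a root and `u` lies in a
different tree. -/
noncomputable def admissibleEdges (f : V → V) : Finset (V × V) :=
  univ.filter fun e => IsFixedPt f e.1 ∧ ∀ m, f^[m] e.2 ≠ e.1

/-- Pitman's count: whatever the parent `u`, the child must be a root other than the root of `u`. -/
theorem card_admissibleEdges_le {f : V → V} (hf : IsForest f) :
    #(admissibleEdges f) ≤ Fintype.card V * (#(forestRoots f) - 1) := by
  choose m hm using hf
  have hsub : admissibleEdges f ⊆
      univ.biUnion fun u => ((forestRoots f).erase (f^[m u] u)) ×ˢ {u} := by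
    intro e he
    simp only [admissibleEdges, mem_filter, mem_univ, true_and] at he
    simp only [mem_biUnion, mem_univ, true_and, mem_product, mem_erase, mem_singleton,
      forestRoots, mem_filter]
    exact ⟨e.2, ⟨fun h => he.2 _ h.symm, he.1⟩, rfl⟩
  calc #(admissibleEdges f)
      ≤ ∑ u, #(((forestRoots f).erase (f^[m u] u)) ×ˢ {u}) :=
        (card_le_card hsub).trans card_biUnion_le
    _ = ∑ _u : V, (#(forestRoots f) - 1) := by
      refine sum_congr rfl fun u _ => ?_
      rw [card_product, card_singleton, mul_one, card_erase_of_mem]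
      simpa [forestRoots] using hm u
    _ = Fintype.card V * (#(forestRoots f) - 1) := by rw [sum_const, card_univ, smul_eq_mul]

/-- Pitman's edge sequences: each new edge hangs a root below a vertex of another tree. -/
noncomputable def pitmanSeqs : ℕ → Finset (List (V × V))
  | 0 => {[]}
  | L + 1 => (pitmanSeqs L).biUnion fun l => (admissibleEdges (forestOf l)).image (· :: l)

theorem mem_pitmanSeqs_succ {L : ℕ} {l' : List (V × V)} :
    l' ∈ pitmanSeqs (L + 1) ↔
      ∃ l ∈ pitmanSeqs L, ∃ e ∈ admissibleEdges (forestOf l), e :: l = l' := by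
  simp [pitmanSeqs]

theorem isForest_forestOf {L : ℕ} {l : List (V × V)} (hl : l ∈ pitmanSeqs L) :
    IsForest (forestOf l) := by
  induction L generalizing l with
  | zero =>
    obtain rfl : l = [] := by simpa [pitmanSeqs] using hl
    exact fun v => ⟨0, rfl⟩
  | succ L ih =>
    obtain ⟨l, hl', e, he, rfl⟩ := mem_pitmanSeqs_succ.mp hl
    simp only [admissibleEdges, mem_filter, mem_univ, true_and] at he
    exact (ih hl').update he.1 he.2

theorem card_forestRoots_forestOf {L : ℕ} {l : List (V × V)} (hl : l ∈ pitmanSeqs L) :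
    #(forestRoots (forestOf l)) = Fintype.card V - L := by
  induction L generalizing l with
  | zero =>
    obtain rfl : l = [] := by simpa [pitmanSeqs] using hl
    rw [forestRoots, forestOf, filter_true_of_mem fun v _ => isFixedPt_id v, card_univ,
      Nat.sub_zero]
  | succ L ih =>
    obtain ⟨l, hl', e, he, rfl⟩ := mem_pitmanSeqs_succ.mp hl
    simp only [admissibleEdges, mem_filter, mem_univ, true_and] at he
    have hroot : e.1 ∈ forestRoots (forestOf l) := by simpa [forestRoots] using he.1
    have hne : e.2 ≠ e.1 := he.2 0
    rw [forestOf, forestRoots_update he.1 hne, card_erase_of_mem hroot, ih hl']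
    omega

theorem card_pitmanSeqs_le (L : ℕ) :
    #(pitmanSeqs (V := V) L) ≤ Fintype.card V ^ L * (Fintype.card V - 1).descFactorial L := by
  induction L with
  | zero => simp [pitmanSeqs]
  | succ L ih =>
    calc #(pitmanSeqs (V := V) (L + 1))
        ≤ ∑ l ∈ pitmanSeqs L, #((admissibleEdges (forestOf l)).image (· :: l)) :=
          card_biUnion_le
      _ ≤ ∑ _l ∈ pitmanSeqs (V := V) L, Fintype.card V * (Fintype.card V - 1 - L) := by
          refine sum_le_sum fun l hl => card_image_le.trans ?_
          refine (card_admissibleEdges_le (isForest_forestOf hl)).trans_eq ?_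
          rw [card_forestRoots_forestOf hl, Nat.sub_right_comm]
      _ = #(pitmanSeqs (V := V) L) * (Fintype.card V * (Fintype.card V - 1 - L)) := by
          rw [sum_const, smul_eq_mul]
      _ ≤ Fintype.card V ^ (L + 1) * (Fintype.card V - 1).descFactorial (L + 1) := by
          rw [Nat.descFactorial_succ, pow_succ]
          calc _ ≤ Fintype.card V ^ L * (Fintype.card V - 1).descFactorial L *
                (Fintype.card V * (Fintype.card V - 1 - L)) := Nat.mul_le_mul_right _ ih
            _ = _ := by ring

open Classical in
noncomputable def rootedTrees (r : V) : Finset (V → V) :=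
  univ.filter (IsRootedTree · r)

theorem mem_rootedTrees {f : V → V} {r : V} : f ∈ rootedTrees r ↔ IsRootedTree f r := by
  simp [rootedTrees]

theorem mem_pitmanSeqs_of_isRootedTree {g : V → V} {r : V} (hg : IsRootedTree g r) :
    ∀ l : List (V × V), (l.map Prod.fst).Nodup → (∀ e ∈ l, e.1 ≠ r ∧ e.2 = g e.1) →
      l ∈ pitmanSeqs l.length
  | [], _, _ => by simp [pitmanSeqs]
  | e :: l, hnd, hl => by
    rw [List.map_cons, List.nodup_cons] at hnd
    have hl' : ∀ e' ∈ l, e'.1 ≠ r ∧ e'.2 = g e'.1 := fun e' he' =>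
      hl e' (List.mem_cons_of_mem e he')
    refine mem_pitmanSeqs_succ.mpr
      ⟨l, mem_pitmanSeqs_of_isRootedTree hg l hnd.2 hl', e, ?_, rfl⟩
    simp only [admissibleEdges, mem_filter, mem_univ, true_and]
    refine ⟨forestOf_apply_of_notMem hnd.1, fun m hm => ?_⟩
    obtain ⟨k, hk⟩ :=
      exists_iterate_eq_of_forall_eq_or (forestOf_apply_eq_or fun e' he' => (hl' e' he').2) m e.2
    rw [hk, (hl e List.mem_cons_self).2, ← iterate_succ_apply] at hm
    exact (hl e List.mem_cons_self).1 (hg.eq_of_isPeriodicPt k.succ_pos hm)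

/-- Relabelling a tree rooted at `r` by all permutations `π` and listing its edges in a fixed
order gives `(card V)!` distinct Pitman sequences per tree. -/
theorem card_rootedTrees_mul_factorial_le (r : V) :
    #(rootedTrees r) * (Fintype.card V).factorial ≤
      #(pitmanSeqs (V := V) (Fintype.card V - 1)) := by
  set vs := (univ.erase r).toList
  have hlen : vs.length = Fintype.card V - 1 := by
    rw [length_toList, card_erase_of_mem (mem_univ r), card_univ]
  rw [← Fintype.card_perm, ← card_univ, ← card_product, ← hlen]
  refine card_le_card_of_injOn (fun t => vs.map fun v => (t.2 v, t.2 (t.1 v))) ?_ ?_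
  · rintro ⟨f, π⟩ hf
    simp only [coe_product, Set.mem_prod, mem_coe, mem_rootedTrees, mem_univ, and_true] at hf
    have := mem_pitmanSeqs_of_isRootedTree (hf.conj π) (vs.map fun v => (π v, π (f v)))
      (by simpa [List.map_map, comp_def] using (nodup_toList _).map π.injective)
      fun e he => by
        obtain ⟨v, hv, rfl⟩ := List.mem_map.mp he
        simp_all [vs]
    simpa using this
  · rintro ⟨f₁, π₁⟩ h₁ ⟨f₂, π₂⟩ h₂ heq
    simp only [coe_product, Set.mem_prod, mem_coe, mem_rootedTrees, mem_univ, and_true] at h₁ h₂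
    have hv : ∀ v ≠ r, π₁ v = π₂ v ∧ π₁ (f₁ v) = π₂ (f₂ v) := fun v hv => by
      simpa using List.map_inj_left.mp heq v (by simp [vs, hv])
    have hπ : π₁ = π₂ := by
      ext v
      rcases eq_or_ne v r with rfl | hvr
      · by_contra hne
        obtain ⟨w, hw⟩ := π₁.surjective (π₂ v)
        have hwr : w ≠ v := by rintro rfl; exact hne hw
        exact hwr (π₂.injective (by rw [← hw, (hv w hwr).1]))
      · exact (hv v hvr).1
    subst hπ
    refine Prod.ext (funext fun v => ?_) rfl
    rcases eq_or_ne v r with rfl | hvr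
    · exact h₁.1.trans h₂.1.symm
    · exact π₁.injective (hv v hvr).2

theorem card_rootedTrees_le (r : V) :
    #(rootedTrees r) ≤ Fintype.card V ^ (Fintype.card V - 2) := by
  have h := (card_rootedTrees_mul_factorial_le r).trans (card_pitmanSeqs_le _)
  obtain ⟨N, hN⟩ : ∃ N, Fintype.card V = N + 1 :=
    Nat.exists_eq_add_one.mpr (Fintype.card_pos_iff.mpr ⟨r⟩)
  rw [hN, Nat.add_sub_cancel, Nat.descFactorial_self, Nat.factorial_succ, ← mul_assoc] at h
  rw [hN]
  refine Nat.le_of_mul_le_mul_right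
    ((Nat.le_of_mul_le_mul_right h N.factorial_pos).trans ?_) N.succ_pos
  rw [← pow_succ]
  exact Nat.pow_le_pow_right N.succ_pos (by omega)

open Classical in
/-- Prim's algorithm as a maximality argument: a partial tree of `rel`-edges reaching the most
vertices could otherwise be extended across a cut. -/
theorem exists_isRootedTree_of_forall_exists_rel (rel : V → V → Prop) (r : V)
    (hcut : ∀ J : Finset V, r ∈ J → J ≠ univ → ∃ w ∉ J, ∃ v ∈ J, rel w v) :
    ∃ f, IsRootedTree f r ∧ ∀ v ≠ r, rel v (f v) := by
  let reach (f : V → V) : Finset V := univ.filter fun v => ∃ m, f^[m] v = r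
  let good : Finset (V → V) := univ.filter fun f => f r = r ∧ ∀ v, f v = v ∨ rel v (f v)
  obtain ⟨f, hf, hmax⟩ := good.exists_max_image (fun f => #(reach f))
    ⟨id, by simp [good]⟩
  simp only [good, mem_filter, mem_univ, true_and] at hf hmax
  have hr : r ∈ reach f := by simpa [reach] using ⟨0, rfl⟩
  by_cases hJ : reach f = univ
  · have hreach : ∀ v, ∃ m, f^[m] v = r := fun v => by
      have hv : v ∈ reach f := hJ ▸ mem_univ v
      simpa [reach] using hv
    refine ⟨f, ⟨hf.1, hreach⟩, fun v hv => (hf.2 v).resolve_left fun hfix => hv ?_⟩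
    obtain ⟨m, hm⟩ := hreach v
    rwa [iterate_fixed hfix] at hm
  obtain ⟨w, hw, v, hv, hwv⟩ := hcut (reach f) hr hJ
  simp only [reach, mem_filter, mem_univ, true_and, not_exists] at hw hv
  have hwr : r ≠ w := fun h => hw 0 h.symm
  have hsub : insert w (reach f) ⊆ reach (update f w v) := by
    intro u hu
    simp only [reach, mem_insert, mem_filter, mem_univ, true_and] at hu ⊢
    rcases hu with rfl | ⟨m, hm⟩
    · obtain ⟨m, hm⟩ := hv
      exact ⟨m + 1, by rw [iterate_succ_apply, update_self, iterate_update_eq_of_not_reach hw hm]⟩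
    · exact ⟨m, iterate_update_eq_of_not_reach hw hm⟩
  have hgood : update f w v r = r ∧ ∀ u, update f w v u = u ∨ rel u (update f w v u) := by
    refine ⟨by rw [update_of_ne hwr, hf.1], fun u => ?_⟩
    rcases eq_or_ne u w with rfl | hu
    · exact Or.inr (by rwa [update_self])
    · rw [update_of_ne hu]; exact hf.2 u
  have := (card_le_card hsub).trans (hmax _ hgood)
  rw [card_insert_of_notMem (by simpa [reach] using hw)] at this
  omega

end Forest

theorem LinearMap.det_one_sub_of_isNilpotent {R M : Type*} [CommRing R] [IsDomain R]
    [AddCommGroup M] [Module R M] [Module.Free R M] [Module.Finite R M] {N : Module.End R M}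
    (hN : IsNilpotent N) : LinearMap.det (1 - N) = 1 := by
  have h := N.eval_charpoly 1
  rw [hN.charpoly_eq_X_pow_finrank] at h
  simpa using h.symm

section TreeShift

variable {R M : Type*} [CommRing R] [AddCommGroup M] [Module R M] {n : ℕ}

/-- Vertex `i + 1` carries `x i` and the root `0` carries `0`; each vertex reads its parent's
value. -/
def treeShift (f : Fin (n + 1) → Fin (n + 1)) : Module.End R (Fin n → M) where
  toFun x i := Matrix.vecCons 0 x (f i.succ)
  map_add' x y := funext fun i => by
    dsimp only [Pi.add_apply]
    cases f i.succ using Fin.cases <;> simp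
  map_smul' c x := funext fun i => by
    dsimp only [Pi.smul_apply, RingHom.id_apply]
    cases f i.succ using Fin.cases <;> simp

theorem treeShift_apply (f : Fin (n + 1) → Fin (n + 1)) (x : Fin n → M) (i : Fin n) :
    treeShift (R := R) f x i = Matrix.vecCons 0 x (f i.succ) := rfl

theorem treeShift_pow_apply {f : Fin (n + 1) → Fin (n + 1)} (hf : f 0 = 0) (k : ℕ)
    (x : Fin n → M) (i : Fin n) :
    (treeShift (R := R) f ^ k) x i = Matrix.vecCons 0 x (f^[k] i.succ) := by
  induction k generalizing i with
  | zero => rfl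
  | succ k ih =>
    rw [pow_succ', Module.End.mul_apply, treeShift_apply, iterate_succ_apply]
    refine Fin.cases ?_ (fun j => ?_) (f i.succ)
    · rw [iterate_fixed hf]; rfl
    · rw [Matrix.cons_val_succ, ih]

theorem isNilpotent_treeShift {f : Fin (n + 1) → Fin (n + 1)} (hf : IsRootedTree f 0) :
    IsNilpotent (treeShift (R := R) (M := M) f) := by
  obtain ⟨K, hK⟩ := hf.exists_iterate_eq_root
  exact ⟨K, LinearMap.ext fun x => funext fun i => by rw [treeShift_pow_apply hf.1, hK]; rfl⟩

end TreeShift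

theorem measure_preimage_one_sub_treeShift {E : Type*} [NormedAddCommGroup E] [NormedSpace ℝ E]
    [MeasurableSpace E] [BorelSpace E] [FiniteDimensional ℝ E] (μ : Measure E)
    [μ.IsAddHaarMeasure] {n : ℕ}
    {f : Fin (n + 1) → Fin (n + 1)} (hf : IsRootedTree f 0) (A : Set E) :
    Measure.pi (fun _ : Fin n => μ)
        ((1 - treeShift f : Module.End ℝ (Fin n → E)) ⁻¹' Set.univ.pi fun _ => A) =
      μ A ^ n := by
  have hdet := LinearMap.det_one_sub_of_isNilpotent (isNilpotent_treeShift (R := ℝ) (M := E) hf)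
  rw [Measure.addHaar_preimage_linearMap _ (by rw [hdet]; exact one_ne_zero), hdet, Measure.pi_pi]
  simp

theorem exists_dist_eq_setDist {E : Type*} [PseudoMetricSpace E] {A B : Set E} (hA : A.Finite)
    (hB : B.Finite) (hA' : A.Nonempty) (hB' : B.Nonempty) :
    ∃ a ∈ A, ∃ b ∈ B, setDist A B = dist a b := by
  have h : {r | ∃ a ∈ A, ∃ b ∈ B, r = dist a b} = Set.image2 dist A B := by
    ext r
    simp [eq_comm]
  obtain ⟨a, ha, b, hb, hab⟩ := h ▸ (hA'.image2 hB').csInf_mem (hA.image2 dist hB)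
  exact ⟨a, ha, b, hb, hab⟩

theorem setDist_le_sigNorm {d n : ℕ} (x : Fin n → EuclideanSpace ℝ (Fin d)) {I : Finset (Fin n)}
    (hI : I ≠ univ) : setDist (insert 0 (x '' ↑I)) (x '' ↑Iᶜ) ≤ sigNorm d n x := by
  refine le_csSup (Set.Finite.bddAbove ?_) ⟨I, hI, rfl⟩
  refine (Set.finite_range fun I : Finset (Fin n) =>
    setDist (insert 0 (x '' ↑I)) (x '' ↑Iᶜ)).subset ?_
  rintro _ ⟨I, -, rfl⟩
  exact ⟨I, rfl⟩

theorem exists_dist_vecCons_le_of_sigNorm_le {d n : ℕ} {x : Fin n → EuclideanSpace ℝ (Fin d)}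
    (hx : sigNorm d n x ≤ 1) {J : Finset (Fin (n + 1))} (h0 : 0 ∈ J) (hJ : J ≠ univ) :
    ∃ w ∉ J, ∃ v ∈ J, dist (Matrix.vecCons 0 x w) (Matrix.vecCons 0 x v) ≤ 1 := by
  set I : Finset (Fin n) := univ.filter fun i => i.succ ∈ J
  obtain ⟨w, hw⟩ := not_forall.mp (mt eq_univ_of_forall hJ)
  obtain ⟨j, rfl⟩ := Fin.exists_succ_eq.mpr (ne_of_mem_of_not_mem h0 hw).symm
  have hjI : j ∉ I := by simpa [I] using hw
  obtain ⟨a, ha, b, ⟨k, hk, rfl⟩, hab⟩ := exists_dist_eq_setDist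
    ((I.finite_toSet.image x).insert 0) (Iᶜ.finite_toSet.image x)
    (Set.insert_nonempty _ _) ⟨x j, j, by simpa using hjI, rfl⟩
  have hI : I ≠ univ := fun h => hjI (h ▸ mem_univ j)
  have hdist : dist a (x k) ≤ 1 := hab ▸ (setDist_le_sigNorm x hI).trans hx
  have hkJ : k.succ ∉ J := by simpa [I] using hk
  rcases ha with rfl | ⟨i, hi, rfl⟩
  · exact ⟨k.succ, hkJ, 0, h0, by simpa [dist_comm] using hdist⟩
  · exact ⟨k.succ, hkJ, i.succ, by simpa [I] using hi, by simpa [dist_comm] using hdist⟩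

theorem exists_isRootedTree_dist_le_of_sigNorm_le {d n : ℕ}
    {x : Fin n → EuclideanSpace ℝ (Fin d)} (hx : sigNorm d n x ≤ 1) :
    ∃ f : Fin (n + 1) → Fin (n + 1), IsRootedTree f 0 ∧
      ∀ i, dist (x i) (Matrix.vecCons 0 x (f i.succ)) ≤ 1 := by
  obtain ⟨f, hf, hrel⟩ := exists_isRootedTree_of_forall_exists_rel
    (fun a b => dist (Matrix.vecCons 0 x a) (Matrix.vecCons 0 x b) ≤ 1) 0
    fun J h0 hJ => exists_dist_vecCons_le_of_sigNorm_le hx h0 hJ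
  exact ⟨f, hf, fun i => by simpa using hrel i.succ (Fin.succ_ne_zero i)⟩

theorem volume_setOf_sigNorm_le_one_le (d n : ℕ) (hd : 1 ≤ d) :
    volume {x : Fin n → EuclideanSpace ℝ (Fin d) | sigNorm d n x ≤ 1} ≤
      volume (Metric.ball (0 : EuclideanSpace ℝ (Fin d)) 1) ^ n * (n + 1) ^ (n - 1) := by
  have : Nonempty (Fin d) := ⟨⟨0, hd⟩⟩
  have hcover : {x : Fin n → EuclideanSpace ℝ (Fin d) | sigNorm d n x ≤ 1} ⊆
      ⋃ f ∈ rootedTrees (0 : Fin (n + 1)),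
        (1 - treeShift f : Module.End ℝ _) ⁻¹' Set.univ.pi fun _ => Metric.closedBall 0 1 := by
    intro x hx
    obtain ⟨f, hf, hdist⟩ := exists_isRootedTree_dist_le_of_sigNorm_le hx
    exact Set.mem_biUnion (mem_rootedTrees.mpr hf) fun i _ => by
      simpa [treeShift_apply, dist_eq_norm] using hdist i
  calc volume {x : Fin n → EuclideanSpace ℝ (Fin d) | sigNorm d n x ≤ 1}
      ≤ ∑ f ∈ rootedTrees (0 : Fin (n + 1)), volume
          ((1 - treeShift f : Module.End ℝ _) ⁻¹' Set.univ.pi fun _ => Metric.closedBall 0 1) :=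
        (measure_mono hcover).trans (measure_biUnion_finset_le _ _)
    _ = ∑ _f ∈ rootedTrees (0 : Fin (n + 1)),
          volume (Metric.ball (0 : EuclideanSpace ℝ (Fin d)) 1) ^ n :=
        sum_congr rfl fun f hf => by
          rw [← Measure.addHaar_closedBall_eq_addHaar_ball]
          exact measure_preimage_one_sub_treeShift volume (mem_rootedTrees.mp hf) _
    _ = #(rootedTrees (0 : Fin (n + 1))) *
          volume (Metric.ball (0 : EuclideanSpace ℝ (Fin d)) 1) ^ n := by
        rw [sum_const, nsmul_eq_mul]
    _ ≤ _ := by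
        rw [mul_comm]
        gcongr
        have := card_rootedTrees_le (0 : Fin (n + 1))
        rw [Fintype.card_fin, show n + 1 - 2 = n - 1 by omega] at this
        exact_mod_cast this

theorem pow_sub_two_le_exp_one_pow_mul_factorial (p : ℕ) :
    (p : ℝ) ^ (p - 2) ≤ Real.exp 1 ^ (p - 1) * p.factorial := by
  obtain _ | _ | p := p
  · simp
  · simp
  have hexp : Real.exp 1 ≤ ((p + 2 : ℕ) : ℝ) ^ 2 := by
    have := Real.exp_one_lt_d9
    have : (2 : ℝ) ≤ ((p + 2 : ℕ) : ℝ) := by norm_cast; omega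
    nlinarith
  have h := Real.pow_div_factorial_le_exp (p + 2 : ℕ) (Nat.cast_nonneg _) (p + 2)
  rw [div_le_iff₀ (by positivity), ← Real.exp_one_pow] at h
  simp only [Nat.add_sub_cancel]
  refine le_of_mul_le_mul_right ?_ (by positivity : (0 : ℝ) < ((p + 2 : ℕ) : ℝ) ^ 2)
  calc ((p + 2 : ℕ) : ℝ) ^ p * ((p + 2 : ℕ) : ℝ) ^ 2 = ((p + 2 : ℕ) : ℝ) ^ (p + 2) := by ring
    _ ≤ Real.exp 1 ^ (p + 2) * (p + 2).factorial := h
    _ = Real.exp 1 ^ (p + 1) * (p + 2).factorial * Real.exp 1 := by ring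
    _ ≤ _ := by gcongr

/-- The Lebesgue volume of `{x ∈ (ℝ^d)^{p-1} : ‖x‖_sig ≤ 1}` is at most
`ϑ_d^{p-1} · p^{p-2}`, and in particular at most `(e·ϑ_d)^{p-1} · p!`, where
`ϑ_d` is the volume of the `d`-dimensional unit ball. -/
theorem stmt_10 (d p : ℕ) (hd : 1 ≤ d) (hp : 1 ≤ p) :
    volume {x : Fin (p - 1) → EuclideanSpace ℝ (Fin d) | sigNorm d (p - 1) x ≤ 1}
        ≤ (volume (Metric.ball (0 : EuclideanSpace ℝ (Fin d)) 1)) ^ (p - 1)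
            * (p : ENNReal) ^ (p - 2)
      ∧ volume {x : Fin (p - 1) → EuclideanSpace ℝ (Fin d) | sigNorm d (p - 1) x ≤ 1}
        ≤ (ENNReal.ofReal (Real.exp 1)
            * volume (Metric.ball (0 : EuclideanSpace ℝ (Fin d)) 1)) ^ (p - 1)
            * (p.factorial : ENNReal) := by
  obtain ⟨n, rfl⟩ : ∃ n, p = n + 1 := ⟨p - 1, by omega⟩
  have hvol := volume_setOf_sigNorm_le_one_le d n hd
  have hcount : ((n + 1 : ℕ) : ENNReal) ^ (n + 1 - 2) ≤
      ENNReal.ofReal (Real.exp 1) ^ (n + 1 - 1) * (n + 1).factorial := by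
    have h := ENNReal.ofReal_le_ofReal (pow_sub_two_le_exp_one_pow_mul_factorial (n + 1))
    rwa [ENNReal.ofReal_mul (by positivity), ENNReal.ofReal_pow (Real.exp_pos 1).le,
      ENNReal.ofReal_pow (by positivity), ENNReal.ofReal_natCast, ENNReal.ofReal_natCast] at h
  rw [show n + 1 - 2 = n - 1 by omega, Nat.add_sub_cancel] at hcount ⊢
  push_cast at hcount ⊢
  refine ⟨hvol, hvol.trans ?_⟩
  rw [mul_pow, mul_comm (ENNReal.ofReal _ ^ n), mul_assoc]
  gcongr
end

section
/- Let (m_I)_{I ⊆ {1,…,p}} be real numbers, define cumulants κ_I = Σ_{Π∈Q(I)} (−1)^{|Π|−1}(|Π|−1)! Π_{π∈Π} m_π and clusters δ_{I,J} = m_{I∪J} − m_I m_J for disjoint I,J. Then for any nonempty proper subset I of {1,…,p} with 1 ∈ I, κ_{{1,…,p}} = Σ_{Π ≺ {I,I^c}} Σ_{τ∈S_{|Π|}, τ(1)=1} (−1)^{|Π|+|D(Π,τ)|−1} Π_{(σ1,σ2)∈D(Π,τ)} δ_{σ1,σ2} · Π_{σ∈M(Π,τ)} m_σ, where D(Π,τ)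 is the set of pairs of consecutive (under the ordering τ) blocks with the first contained in I and the second in I^c, M(Π,τ) is the set of blocks not involved in any such pair, and moreover D(Π,τ) is always nonempty. -/
open Finset

/-- The ordered list of blocks of a set partition `P` determined by an
enumeration `f` of its blocks. -/
def ospList {p : ℕ} (P : Finpartition (Finset.univ : Finset (Fin p)))
    (f : Fin P.parts.card ≃ {π // π ∈ P.parts}) : List (Finset (Fin p)) :=
  List.ofFn (fun i => ((f i : {π // π ∈ P.parts}) : Finset (Fin p)))

/-- `D(Π,τ)`: the pairs of consecutive blocks, the first contained in `I`
and the second in `I^c`. -/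
def Dlist {p : ℕ} (I : Finset (Fin p)) (L : List (Finset (Fin p))) :
    List (Finset (Fin p) × Finset (Fin p)) :=
  (L.zip L.tail).filter (fun q => decide (q.1 ⊆ I ∧ q.2 ⊆ Iᶜ))

/-- `M(Π,τ)`: the blocks not involved in any pair of `D(Π,τ)`. -/
def Mlist {p : ℕ} (I : Finset (Fin p)) (L : List (Finset (Fin p))) :
    List (Finset (Fin p)) :=
  L.filter (fun σ =>
    decide (σ ∉ (Dlist I L).map Prod.fst ∧ σ ∉ (Dlist I L).map Prod.snd))

/-!
Expanding every cluster `δ_{a,b} = m_{a ∪ b} - m_a m_b` on the right-hand side, each pair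
`(a, b)` of `D(Π,τ)` contributes either the merged block `a ∪ b` or the two blocks `a`, `b`.
Merging a set of such pairs turns an ordered partition refining `{I, Iᶜ}` into an ordered
partition of `{1,…,p}` whose first block contains `1`, and each of those arises exactly once:
its refining preimage is obtained by splitting every block that meets both `I` and `Iᶜ` into its
`I`-part followed by its `Iᶜ`-part. Each merge shortens the list by one block and each
unmerged pair carries a minus sign, so the signs agree and the right-hand side becomes the sum of
`(-1)^(|Π|-1) ∏ m_π` over ordered partitions with `1` in the first block; every unordered
partition has `(|Π|-1)!` such orderings, which gives the cumulant. Finally `D(Π,τ) ≠ ∅` since the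
first block lies in `I` and some block lies in `Iᶜ`.
-/

namespace ClusterExpansion

section Blocks

variable {α : Type*} [DecidableEq α]

theorem forall_disjoint_of_sup_eq {σ : Finset α} {L l : List (Finset α)}
    (hsup : L.toFinset.sup id = l.toFinset.sup id) (h : ∀ τ ∈ l, Disjoint σ τ) :
    ∀ τ ∈ L, Disjoint σ τ := by
  intro τ hτ
  have hσ : Disjoint σ (L.toFinset.sup id) :=
    hsup ▸ Finset.disjoint_sup_right.2 fun τ hτ => h τ (List.mem_toFinset.1 hτ)
  exact hσ.mono_right (le_sup (f := id) (List.mem_toFinset.2 hτ))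

variable [Fintype α]

structure IsOrderedPartition (z : α) (L : List (Finset α)) : Prop where
  nonempty : ∀ σ ∈ L, σ.Nonempty
  pairwise_disjoint : L.Pairwise Disjoint
  sup_eq_univ : L.toFinset.sup id = univ
  mem_headI : z ∈ L.headI

variable {z : α} {L : List (Finset α)}

theorem IsOrderedPartition.nodup (h : IsOrderedPartition z L) : L.Nodup :=
  h.pairwise_disjoint.imp_of_mem fun ha _ hab he =>
    (h.nonempty _ ha).ne_empty (disjoint_self.1 (he ▸ hab : Disjoint _ _))

theorem IsOrderedPartition.ne_nil (h : IsOrderedPartition z L) : L ≠ [] := by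
  rintro rfl
  exact notMem_empty z h.mem_headI

def IsOrderedPartition.finpartition (h : IsOrderedPartition z L) :
    Finpartition (univ : Finset α) where
  parts := L.toFinset
  supIndep := supIndep_iff_pairwiseDisjoint.2 fun _ ha _ hb hab =>
    h.pairwise_disjoint.forall (List.mem_toFinset.1 ha) (List.mem_toFinset.1 hb) hab
  sup_parts := h.sup_eq_univ
  bot_notMem hbot := (h.nonempty ⊥ (List.mem_toFinset.1 hbot)).ne_empty rfl

end Blocks

section SplitMerge

variable {α : Type*} [Fintype α] [DecidableEq α] (I : Finset α)

def splitBlocks : List (Finset α) → List (Finset α)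
  | [] => []
  | σ :: l =>
    if σ ⊆ I ∨ σ ⊆ Iᶜ then σ :: splitBlocks l else (σ ∩ I) :: (σ ∩ Iᶜ) :: splitBlocks l

/-- All ways of merging some of the pairs `(a, b)` of `D(Π,τ)` into single blocks `a ∪ b`. -/
def merges : List (Finset α) → Finset (List (Finset α))
  | [] => {[]}
  | [a] => {[a]}
  | a :: b :: l =>
    if a ⊆ I ∧ b ⊆ Iᶜ then
      (merges l).image ((a ∪ b) :: ·) ∪ (merges (b :: l)).image (a :: ·)
    else (merges (b :: l)).image (a :: ·)

variable {I}

theorem inter_union_inter_compl (σ : Finset α) : σ ∩ I ∪ σ ∩ Iᶜ = σ := sup_inf_inf_compl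

@[simp] theorem splitBlocks_nil : splitBlocks I [] = [] := rfl

theorem splitBlocks_cons_of_refines {σ : Finset α} (l : List (Finset α))
    (h : σ ⊆ I ∨ σ ⊆ Iᶜ) : splitBlocks I (σ :: l) = σ :: splitBlocks I l := if_pos h

theorem splitBlocks_cons_of_not_refines {σ : Finset α} (l : List (Finset α))
    (h : ¬(σ ⊆ I ∨ σ ⊆ Iᶜ)) :
    splitBlocks I (σ :: l) = (σ ∩ I) :: (σ ∩ Iᶜ) :: splitBlocks I l := if_neg h

theorem splitBlocks_refines (L : List (Finset α)) :
    ∀ τ ∈ splitBlocks I L, τ ⊆ I ∨ τ ⊆ Iᶜ := by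
  induction L using splitBlocks.induct I with
  | case1 => simp
  | case2 σ l h ih => simp_all [splitBlocks_cons_of_refines]
  | case3 σ l h ih => simp_all [splitBlocks_cons_of_not_refines]

theorem sup_splitBlocks (L : List (Finset α)) :
    (splitBlocks I L).toFinset.sup id = L.toFinset.sup id := by
  induction L using splitBlocks.induct I with
  | case1 => rfl
  | case2 σ l h ih => simp_all [splitBlocks_cons_of_refines]
  | case3 σ l h ih =>
    simp_all [splitBlocks_cons_of_not_refines, ← union_assoc, inter_union_inter_compl]

theorem nonempty_of_mem_splitBlocks {L : List (Finset α)} (hL : ∀ σ ∈ L, σ.Nonempty) :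
    ∀ τ ∈ splitBlocks I L, τ.Nonempty := by
  induction L using splitBlocks.induct I with
  | case1 => simp
  | case2 σ l h ih => simp_all [splitBlocks_cons_of_refines]
  | case3 σ l h ih =>
    rw [splitBlocks_cons_of_not_refines l h]
    rw [not_or, subset_compl_iff_disjoint_right] at h
    rintro τ (_ | ⟨_, _ | ⟨_, hτ⟩⟩)
    · exact not_disjoint_iff_nonempty_inter.1 h.2
    · exact sdiff_eq_inter_compl σ I ▸ sdiff_nonempty.2 h.1
    · exact ih (fun σ hσ => hL σ (List.mem_cons_of_mem _ hσ)) τ hτ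

theorem pairwise_disjoint_splitBlocks {L : List (Finset α)} (hL : L.Pairwise Disjoint) :
    (splitBlocks I L).Pairwise Disjoint := by
  induction L using splitBlocks.induct I with
  | case1 => simp
  | case2 σ l h ih =>
    rw [List.pairwise_cons] at hL
    rw [splitBlocks_cons_of_refines l h, List.pairwise_cons]
    exact ⟨forall_disjoint_of_sup_eq (sup_splitBlocks l) hL.1, ih hL.2⟩
  | case3 σ l h ih =>
    rw [List.pairwise_cons] at hL
    have hσ := forall_disjoint_of_sup_eq (sup_splitBlocks (I := I) l) hL.1
    rw [splitBlocks_cons_of_not_refines l h, List.pairwise_cons, List.pairwise_cons]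
    refine ⟨?_, fun τ hτ => (hσ τ hτ).mono_left inter_subset_left, ih hL.2⟩
    rintro τ (_ | ⟨_, hτ⟩)
    · exact disjoint_of_subset_left inter_subset_right disjoint_compl_right
        |>.mono_right inter_subset_right
    · exact (hσ τ hτ).mono_left inter_subset_left

theorem mem_headI_splitBlocks {z : α} (hz : z ∈ I) {L : List (Finset α)} (h : z ∈ L.headI) :
    z ∈ (splitBlocks I L).headI := by
  match L with
  | [] => exact h
  | σ :: l =>
    by_cases hσ : σ ⊆ I ∨ σ ⊆ Iᶜ
    · rwa [splitBlocks_cons_of_refines l hσ]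
    · rw [splitBlocks_cons_of_not_refines l hσ]
      exact mem_inter.2 ⟨h, hz⟩

@[simp] theorem merges_nil : merges I [] = {[]} := rfl

@[simp] theorem merges_singleton (a : Finset α) : merges I [a] = {[a]} := rfl

theorem merges_cons_cons_of_pair {a b : Finset α} (l : List (Finset α)) (h : a ⊆ I ∧ b ⊆ Iᶜ) :
    merges I (a :: b :: l) =
      (merges I l).image ((a ∪ b) :: ·) ∪ (merges I (b :: l)).image (a :: ·) := if_pos h

theorem merges_cons_cons_of_not_pair {a b : Finset α} (l : List (Finset α))
    (h : ¬(a ⊆ I ∧ b ⊆ Iᶜ)) :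
    merges I (a :: b :: l) = (merges I (b :: l)).image (a :: ·) := if_neg h

theorem cons_mem_merges_cons {a b : Finset α} {l L' : List (Finset α)}
    (h : L' ∈ merges I (b :: l)) : a :: L' ∈ merges I (a :: b :: l) := by
  by_cases hab : a ⊆ I ∧ b ⊆ Iᶜ
  · rw [merges_cons_cons_of_pair l hab]
    exact mem_union_right _ (mem_image_of_mem _ h)
  · rw [merges_cons_cons_of_not_pair l hab]
    exact mem_image_of_mem _ h

theorem sup_of_mem_merges {L L' : List (Finset α)} (h : L' ∈ merges I L) :
    L'.toFinset.sup id = L.toFinset.sup id := by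
  induction L using merges.induct I generalizing L' with
  | case1 => simp_all
  | case2 a => simp_all
  | case3 a b l hab ih ih' =>
    rw [merges_cons_cons_of_pair l hab] at h
    simp only [mem_union, mem_image] at h
    rcases h with ⟨L'', hL'', rfl⟩ | ⟨L'', hL'', rfl⟩
    · simp [ih hL'', union_assoc]
    · simp [ih' hL'']
  | case4 a b l hab ih =>
    rw [merges_cons_cons_of_not_pair l hab] at h
    obtain ⟨L'', hL'', rfl⟩ := mem_image.1 h
    simp [ih hL'']

theorem nonempty_of_mem_merges {L L' : List (Finset α)} (hL : ∀ σ ∈ L, σ.Nonempty)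
    (h : L' ∈ merges I L) : ∀ τ ∈ L', τ.Nonempty := by
  induction L using merges.induct I generalizing L' with
  | case1 => simp_all
  | case2 a => simp_all
  | case3 a b l hab ih ih' =>
    simp only [List.forall_mem_cons] at hL ih ih'
    rw [merges_cons_cons_of_pair l hab] at h
    simp only [mem_union, mem_image] at h
    rcases h with ⟨L'', hL'', rfl⟩ | ⟨L'', hL'', rfl⟩
    · exact List.forall_mem_cons.2 ⟨hL.1.mono subset_union_left, ih hL.2.2 hL''⟩
    · exact List.forall_mem_cons.2 ⟨hL.1, ih' hL.2 hL''⟩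
  | case4 a b l hab ih =>
    simp only [List.forall_mem_cons] at hL ih
    rw [merges_cons_cons_of_not_pair l hab] at h
    obtain ⟨L'', hL'', rfl⟩ := mem_image.1 h
    exact List.forall_mem_cons.2 ⟨hL.1, ih hL.2 hL''⟩

theorem pairwise_disjoint_of_mem_merges {L L' : List (Finset α)} (hL : L.Pairwise Disjoint)
    (h : L' ∈ merges I L) : L'.Pairwise Disjoint := by
  induction L using merges.induct I generalizing L' with
  | case1 => simp_all
  | case2 a => simp_all
  | case3 a b l hab ih ih' =>
    obtain ⟨ha, hb, hl⟩ : (∀ τ ∈ b :: l, Disjoint a τ) ∧ (∀ τ ∈ l, Disjoint b τ) ∧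
        l.Pairwise Disjoint := by simpa [List.pairwise_cons] using hL
    rw [merges_cons_cons_of_pair l hab] at h
    simp only [mem_union, mem_image] at h
    rcases h with ⟨L'', hL'', rfl⟩ | ⟨L'', hL'', rfl⟩
    · refine List.pairwise_cons.2 ⟨fun τ hτ => disjoint_union_left.2 ⟨?_, ?_⟩, ih hl hL''⟩
      · exact forall_disjoint_of_sup_eq (sup_of_mem_merges hL'')
          (fun τ hτ => ha τ (List.mem_cons_of_mem _ hτ)) τ hτ
      · exact forall_disjoint_of_sup_eq (sup_of_mem_merges hL'') hb τ hτ
    · exact List.pairwise_cons.2 ⟨forall_disjoint_of_sup_eq (sup_of_mem_merges hL'') ha,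
        ih' (List.pairwise_cons.1 hL).2 hL''⟩
  | case4 a b l hab ih =>
    rw [merges_cons_cons_of_not_pair l hab] at h
    obtain ⟨L'', hL'', rfl⟩ := mem_image.1 h
    exact List.pairwise_cons.2 ⟨forall_disjoint_of_sup_eq (sup_of_mem_merges hL'')
      (List.pairwise_cons.1 hL).1, ih (List.pairwise_cons.1 hL).2 hL''⟩

theorem headI_subset_of_mem_merges {L L' : List (Finset α)} (h : L' ∈ merges I L) :
    L.headI ⊆ L'.headI := by
  induction L using merges.induct I generalizing L' with
  | case1 => simp_all
  | case2 a => simp_all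
  | case3 a b l hab =>
    rw [merges_cons_cons_of_pair l hab] at h
    simp only [mem_union, mem_image] at h
    rcases h with ⟨L'', -, rfl⟩ | ⟨L'', -, rfl⟩
    · exact subset_union_left
    · exact subset_rfl
  | case4 a b l hab =>
    rw [merges_cons_cons_of_not_pair l hab] at h
    obtain ⟨L'', -, rfl⟩ := mem_image.1 h
    exact subset_rfl

theorem mem_merges_splitBlocks (L : List (Finset α)) : L ∈ merges I (splitBlocks I L) := by
  induction L using splitBlocks.induct I with
  | case1 => simp
  | case2 σ l h ih =>
    rw [splitBlocks_cons_of_refines l h]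
    rcases hl : splitBlocks I l with _ | ⟨b, t⟩
    · rw [hl, merges_nil, mem_singleton] at ih
      simp [ih]
    · exact cons_mem_merges_cons (hl ▸ ih)
  | case3 σ l h ih =>
    rw [splitBlocks_cons_of_not_refines l h,
      merges_cons_cons_of_pair _ ⟨inter_subset_right, inter_subset_right⟩]
    exact mem_union_left _ (mem_image.2 ⟨l, ih, by rw [inter_union_inter_compl]⟩)

theorem union_inter_eq_of_subset_of_subset_compl {a b : Finset α} (ha : a ⊆ I) (hb : b ⊆ Iᶜ) :
    (a ∪ b) ∩ I = a ∧ (a ∪ b) ∩ Iᶜ = b := by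
  rw [subset_compl_iff_disjoint_right] at hb
  have ha' : Disjoint a Iᶜ := disjoint_compl_right.mono_left ha
  refine ⟨?_, ?_⟩
  · rw [union_inter_distrib_right, inter_eq_left.2 ha, disjoint_iff_inter_eq_empty.1 hb,
      union_empty]
  · rw [union_inter_distrib_right, inter_eq_left.2 (subset_compl_iff_disjoint_right.2 hb),
      disjoint_iff_inter_eq_empty.1 ha', empty_union]

theorem not_refines_union {a b : Finset α} (ha : a.Nonempty) (hb : b.Nonempty)
    (hab : a ⊆ I ∧ b ⊆ Iᶜ) : ¬(a ∪ b ⊆ I ∨ a ∪ b ⊆ Iᶜ) := by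
  obtain ⟨x, hx⟩ := ha
  obtain ⟨y, hy⟩ := hb
  rintro (h | h)
  · exact mem_compl.1 (hab.2 hy) (h (mem_union_right _ hy))
  · exact mem_compl.1 (h (mem_union_left _ hx)) (hab.1 hx)

theorem splitBlocks_of_mem_merges {L L' : List (Finset α)}
    (hL : ∀ σ ∈ L, σ.Nonempty ∧ (σ ⊆ I ∨ σ ⊆ Iᶜ)) (h : L' ∈ merges I L) :
    splitBlocks I L' = L := by
  induction L using merges.induct I generalizing L' with
  | case1 => simp_all
  | case2 a =>
    rw [merges_singleton, mem_singleton] at h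
    subst h
    exact splitBlocks_cons_of_refines [] (hL a (List.mem_singleton_self a)).2
  | case3 a b l hab ih ih' =>
    rw [merges_cons_cons_of_pair l hab] at h
    simp only [mem_union, mem_image] at h
    rcases h with ⟨L'', hL'', rfl⟩ | ⟨L'', hL'', rfl⟩
    · obtain ⟨hI, hIc⟩ := union_inter_eq_of_subset_of_subset_compl hab.1 hab.2
      rw [splitBlocks_cons_of_not_refines _
        (not_refines_union (hL a (by simp)).1 (hL b (by simp)).1 hab), hI, hIc,
        ih (fun σ hσ => hL σ (by simp [hσ])) hL'']
    · rw [splitBlocks_cons_of_refines _ (hL a (by simp)).2,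
        ih' (fun σ hσ => hL σ (List.mem_cons_of_mem _ hσ)) hL'']
  | case4 a b l hab ih =>
    rw [merges_cons_cons_of_not_pair l hab] at h
    obtain ⟨L'', hL'', rfl⟩ := mem_image.1 h
    rw [splitBlocks_cons_of_refines _ (hL a (by simp)).2,
      ih (fun σ hσ => hL σ (List.mem_cons_of_mem _ hσ)) hL'']

variable {z : α}

theorem isOrderedPartition_splitBlocks (hz : z ∈ I) {L : List (Finset α)}
    (h : IsOrderedPartition z L) : IsOrderedPartition z (splitBlocks I L) :=
  ⟨nonempty_of_mem_splitBlocks h.nonempty, pairwise_disjoint_splitBlocks h.pairwise_disjoint,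
    (sup_splitBlocks L).trans h.sup_eq_univ, mem_headI_splitBlocks hz h.mem_headI⟩

theorem isOrderedPartition_of_mem_merges {L L' : List (Finset α)} (h : IsOrderedPartition z L)
    (hL' : L' ∈ merges I L) : IsOrderedPartition z L' :=
  ⟨nonempty_of_mem_merges h.nonempty hL', pairwise_disjoint_of_mem_merges h.pairwise_disjoint hL',
    (sup_of_mem_merges hL').trans h.sup_eq_univ, headI_subset_of_mem_merges hL' h.mem_headI⟩

theorem ne_nil_of_mem_merges {L L' : List (Finset α)} (hL : L ≠ []) (h : L' ∈ merges I L) :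
    L' ≠ [] := by
  match L, hL with
  | [a], _ => simp_all
  | a :: b :: l, _ =>
    by_cases hab : a ⊆ I ∧ b ⊆ Iᶜ
    · rw [merges_cons_cons_of_pair l hab, mem_union, mem_image, mem_image] at h
      rcases h with ⟨_, -, rfl⟩ | ⟨_, -, rfl⟩ <;> simp
    · rw [merges_cons_cons_of_not_pair l hab, mem_image] at h
      obtain ⟨_, -, rfl⟩ := h
      simp

theorem sum_eq_sum_refining_sum_merges {M : Type*} [AddCommMonoid M] {s : Finset (List (Finset α))}
    (hs : ∀ L, L ∈ s ↔ IsOrderedPartition z L) (hz : z ∈ I) (g : List (Finset α) → M) :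
    ∑ L' ∈ s, g L' =
      ∑ L ∈ s with ∀ σ ∈ L, σ ⊆ I ∨ σ ⊆ Iᶜ, ∑ L' ∈ merges I L, g L' := by
  have hsplit : ∀ L' ∈ s, splitBlocks I L' ∈ s.filter (∀ σ ∈ ·, σ ⊆ I ∨ σ ⊆ Iᶜ) := fun L' hL' =>
    mem_filter.2 ⟨(hs _).2 (isOrderedPartition_splitBlocks hz ((hs L').1 hL')),
      splitBlocks_refines L'⟩
  rw [← sum_fiberwise_of_maps_to hsplit]
  refine sum_congr rfl fun L hL => sum_congr (ext fun L' => ?_) fun _ _ => rfl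
  obtain ⟨hLs, hLI⟩ := mem_filter.1 hL
  have hLp := (hs L).1 hLs
  rw [mem_filter]
  constructor
  · rintro ⟨-, rfl⟩
    exact mem_merges_splitBlocks L'
  · intro hL'
    exact ⟨(hs L').2 (isOrderedPartition_of_mem_merges hLp hL'),
      splitBlocks_of_mem_merges (fun σ hσ => ⟨hLp.nonempty σ hσ, hLI σ hσ⟩) hL'⟩

end SplitMerge

section Enumerations

variable {p : ℕ}

theorem headI_eq_getElem_zero {β : Type*} [Inhabited β] {L : List β} (h : 0 < L.length) :
    L.headI = L[0] := by
  cases L with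
  | nil => simp at h
  | cons a l => rfl

/-- The enumerations of the blocks of `P` listing the block of `z` first; for `z = 1` these are the
orderings `τ` with `τ(1) = 1`. -/
def pointedEnumerations (z : Fin p) (P : Finpartition (univ : Finset (Fin p))) :
    Finset (Fin #P.parts ≃ {π // π ∈ P.parts}) :=
  univ.filter fun f =>
    ∀ i : Fin #P.parts, z ∈ ((f i : {π // π ∈ P.parts}) : Finset (Fin p)) → (i : ℕ) = 0

variable {P : Finpartition (univ : Finset (Fin p))}

theorem mem_ospList (f : Fin #P.parts ≃ {π // π ∈ P.parts}) {σ : Finset (Fin p)} :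
    σ ∈ ospList P f ↔ σ ∈ P.parts := by
  simp only [ospList, List.mem_ofFn]
  exact ⟨by rintro ⟨i, rfl⟩; exact (f i).2, fun h => ⟨f.symm ⟨σ, h⟩, by simp⟩⟩

theorem ospList_length (f : Fin #P.parts ≃ {π // π ∈ P.parts}) :
    (ospList P f).length = #P.parts := List.length_ofFn

theorem ospList_nodup (f : Fin #P.parts ≃ {π // π ∈ P.parts}) : (ospList P f).Nodup :=
  List.nodup_ofFn.2 fun _ _ h => f.injective (Subtype.ext h)

theorem ospList_toFinset (f : Fin #P.parts ≃ {π // π ∈ P.parts}) :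
    (ospList P f).toFinset = P.parts := by
  ext σ
  rw [List.mem_toFinset, mem_ospList]

theorem isOrderedPartition_ospList {z : Fin p} (f : Fin #P.parts ≃ {π // π ∈ P.parts})
    (hf : ∀ i : Fin #P.parts, z ∈ ((f i : {π // π ∈ P.parts}) : Finset (Fin p)) → (i : ℕ) = 0) :
    IsOrderedPartition z (ospList P f) where
  nonempty σ hσ := P.nonempty_of_mem_parts ((mem_ospList f).1 hσ)
  pairwise_disjoint := by
    refine List.pairwise_ofFn.2 fun i j hij => ?_
    exact P.disjoint (f i).2 (f j).2 fun h => hij.ne (f.injective (Subtype.ext h))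
  sup_eq_univ := by rw [ospList_toFinset]; exact P.sup_parts
  mem_headI := by
    obtain ⟨π, hπ, hz⟩ := P.exists_mem (mem_univ z)
    set i := f.symm ⟨π, hπ⟩
    have hzi : z ∈ ((f i : {π // π ∈ P.parts}) : Finset (Fin p)) := by simpa [i] using hz
    rw [headI_eq_getElem_zero (by rw [ospList_length]; exact i.pos)]
    simp only [ospList, List.getElem_ofFn]
    convert hzi
    exact (hf i hzi).symm

theorem ospList_injective :
    Function.Injective fun x : Σ P : Finpartition (univ : Finset (Fin p)),
      Fin #P.parts ≃ {π // π ∈ P.parts} => ospList x.1 x.2 := by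
  rintro ⟨P, f⟩ ⟨Q, g⟩ h
  obtain rfl : P = Q := Finpartition.ext <| by
    rw [← ospList_toFinset f, ← ospList_toFinset g]
    exact congrArg List.toFinset h
  have hfg : f = g := Equiv.ext fun i => Subtype.ext (congrFun (List.ofFn_injective h) i)
  rw [hfg]

theorem exists_ospList_eq {z : Fin p} {L : List (Finset (Fin p))} (h : IsOrderedPartition z L) :
    ∃ P : Finpartition (univ : Finset (Fin p)), ∃ f : Fin #P.parts ≃ {π // π ∈ P.parts},
      (∀ i : Fin #P.parts, z ∈ ((f i : {π // π ∈ P.parts}) : Finset (Fin p)) → (i : ℕ) = 0) ∧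
        ospList P f = L := by
  have hcard : #h.finpartition.parts = L.length := List.toFinset_card_of_nodup h.nodup
  let f : Fin #h.finpartition.parts ≃ {π // π ∈ h.finpartition.parts} :=
    (finCongr hcard).trans ((h.nodup.getEquiv L).trans
      (Equiv.subtypeEquivRight fun _ => List.mem_toFinset.symm))
  have hf : ∀ i, ((f i : {π // π ∈ h.finpartition.parts}) : Finset (Fin p)) = L[(i : ℕ)] :=
    fun i => rfl
  refine ⟨h.finpartition, f, fun i hzi => ?_, ?_⟩
  · by_contra hi
    have hL : 0 < L.length := hcard ▸ i.pos
    have hz0 : z ∈ L[0] := headI_eq_getElem_zero hL ▸ h.mem_headI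
    rw [hf] at hzi
    exact disjoint_left.1 (List.pairwise_iff_getElem.1 h.pairwise_disjoint 0 i hL
      (hcard ▸ i.isLt) (Nat.pos_of_ne_zero hi)) hz0 hzi
  · refine List.ext_getElem (by rw [ospList_length, hcard]) fun n h1 h2 => ?_
    simp only [ospList, List.getElem_ofFn, hf]

def orderedPartitions (z : Fin p) : Finset (List (Finset (Fin p))) :=
  (univ.sigma (pointedEnumerations z)).image fun x => ospList x.1 x.2

theorem mem_orderedPartitions {z : Fin p} {L : List (Finset (Fin p))} :
    L ∈ orderedPartitions z ↔ IsOrderedPartition z L := by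
  simp only [orderedPartitions, pointedEnumerations, mem_image, mem_sigma, mem_filter, mem_univ,
    true_and]
  constructor
  · rintro ⟨⟨P, f⟩, hf, rfl⟩
    exact isOrderedPartition_ospList f hf
  · intro h
    obtain ⟨P, f, hf, rfl⟩ := exists_ospList_eq h
    exact ⟨⟨P, f⟩, hf, rfl⟩

theorem sum_sum_ospList {M : Type*} [AddCommMonoid M] (z : Fin p)
    (g : List (Finset (Fin p)) → M) :
    ∑ P : Finpartition (univ : Finset (Fin p)),
      ∑ f ∈ pointedEnumerations z P,
        g (ospList P f) = ∑ L ∈ orderedPartitions z, g L := by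
  rw [orderedPartitions, sum_image ospList_injective.injOn, sum_sigma]

theorem card_filter_equiv_apply_eq {β : Type*} [Fintype β] [DecidableEq β] {n : ℕ}
    (hβ : Fintype.card β = n) (i : Fin n) (b : β) :
    #{f : Fin n ≃ β | f i = b} = (n - 1).factorial := by
  have hfiber : ∀ c, #{f : Fin n ≃ β | f i = c} = #{f : Fin n ≃ β | f i = b} := fun c =>
    card_equiv ((Equiv.refl _).equivCongr (Equiv.swap c b)) fun f => by
      simp [Equiv.swap_apply_eq_iff]
  have htotal : n.factorial = n * #{f : Fin n ≃ β | f i = b} :=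
    calc n.factorial = Fintype.card (Fin n ≃ β) := by
          rw [Fintype.card_equiv (Fintype.equivFinOfCardEq hβ).symm, Fintype.card_fin]
      _ = ∑ c, #{f : Fin n ≃ β | f i = c} := by
          rw [← card_univ]
          exact card_eq_sum_card_fiberwise fun _ _ => mem_univ _
      _ = n * #{f : Fin n ≃ β | f i = b} := by
          rw [sum_congr rfl fun c _ => hfiber c, sum_const, card_univ, hβ, smul_eq_mul]
  rw [← Nat.mul_factorial_pred i.pos.ne'] at htotal
  exact (Nat.eq_of_mul_eq_mul_left i.pos htotal).symm

theorem card_pointedEnumerations (z : Fin p) (P : Finpartition (univ : Finset (Fin p))) :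
    #(pointedEnumerations z P) = (#P.parts - 1).factorial := by
  obtain ⟨π, hπ, hz⟩ := P.exists_mem (mem_univ z)
  have hc : 0 < #P.parts := card_pos.2 ⟨π, hπ⟩
  rw [← card_filter_equiv_apply_eq (Fintype.card_coe _) ⟨0, hc⟩ ⟨π, hπ⟩]
  congr 1
  ext f
  simp only [pointedEnumerations, mem_filter, mem_univ, true_and]
  constructor
  · intro hf
    have h0 : f.symm ⟨π, hπ⟩ = ⟨0, hc⟩ := Fin.ext (hf _ (by simpa using hz))
    rw [← h0, Equiv.apply_symm_apply]
  · intro hf i hzi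
    have hi : f i = f ⟨0, hc⟩ := hf ▸ Subtype.ext (P.eq_of_mem_parts (f i).2 hπ hzi hz)
    exact congrArg Fin.val (f.injective hi)

theorem sum_filter_sum_ospList {M : Type*} [AddCommMonoid M] (z : Fin p) (I : Finset (Fin p))
    (g : List (Finset (Fin p)) → M) :
    ∑ P ∈ univ.filter fun P : Finpartition (univ : Finset (Fin p)) =>
        ∀ π ∈ P.parts, π ⊆ I ∨ π ⊆ Iᶜ,
      ∑ f ∈ pointedEnumerations z P,
        g (ospList P f) =
      ∑ L ∈ (orderedPartitions z).filter fun L => ∀ σ ∈ L, σ ⊆ I ∨ σ ⊆ Iᶜ, g L := by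
  rw [sum_filter, sum_filter, ← sum_sum_ospList]
  refine sum_congr rfl fun P _ => ?_
  simp only [mem_ospList]
  split_ifs <;> simp

end Enumerations

section Clusters

variable {p : ℕ} {I : Finset (Fin p)}

@[simp] theorem Dlist_nil : Dlist I [] = [] := rfl

@[simp] theorem Dlist_singleton (a : Finset (Fin p)) : Dlist I [a] = [] := rfl

theorem Dlist_cons_cons_of_pair {a b : Finset (Fin p)} (l : List (Finset (Fin p)))
    (h : a ⊆ I ∧ b ⊆ Iᶜ) : Dlist I (a :: b :: l) = (a, b) :: Dlist I (b :: l) := by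
  simp [Dlist, h]

theorem Dlist_cons_cons_of_not_pair {a b : Finset (Fin p)} (l : List (Finset (Fin p)))
    (h : ¬(a ⊆ I ∧ b ⊆ Iᶜ)) : Dlist I (a :: b :: l) = Dlist I (b :: l) := by
  simp [Dlist, h]

theorem Dlist_cons_of_not_subset {b : Finset (Fin p)} (l : List (Finset (Fin p))) (h : ¬b ⊆ I) :
    Dlist I (b :: l) = Dlist I l := by
  cases l with
  | nil => rfl
  | cons c t => exact Dlist_cons_cons_of_not_pair t fun hbc => h hbc.1

theorem mem_of_mem_Dlist {q : Finset (Fin p) × Finset (Fin p)} {L : List (Finset (Fin p))}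
    (h : q ∈ Dlist I L) : q.1 ∈ L ∧ q.2 ∈ L := by
  obtain ⟨h1, h2⟩ := List.of_mem_zip (List.mem_filter.1 h).1
  exact ⟨h1, List.mem_of_mem_tail h2⟩

@[simp] theorem Mlist_nil : Mlist I [] = [] := rfl

@[simp] theorem Mlist_singleton (a : Finset (Fin p)) : Mlist I [a] = [a] := by
  simp [Mlist]

theorem Mlist_cons_of_Dlist_eq {a : Finset (Fin p)} {l : List (Finset (Fin p))}
    (hD : Dlist I (a :: l) = Dlist I l) (ha : a ∉ l) : Mlist I (a :: l) = a :: Mlist I l := by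
  have hfst : a ∉ (Dlist I l).map Prod.fst := fun h => by
    obtain ⟨q, hq, rfl⟩ := List.mem_map.1 h
    exact ha (mem_of_mem_Dlist hq).1
  have hsnd : a ∉ (Dlist I l).map Prod.snd := fun h => by
    obtain ⟨q, hq, rfl⟩ := List.mem_map.1 h
    exact ha (mem_of_mem_Dlist hq).2
  simp only [Mlist, hD]
  exact List.filter_cons_of_pos (decide_eq_true ⟨hfst, hsnd⟩)

theorem Mlist_cons_cons_of_Dlist_eq {a b : Finset (Fin p)} {l : List (Finset (Fin p))}
    (hD : Dlist I (a :: b :: l) = (a, b) :: Dlist I l) (ha : a ∉ l) (hb : b ∉ l) :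
    Mlist I (a :: b :: l) = Mlist I l := by
  simp only [Mlist, hD]
  rw [List.filter_cons_of_neg (by simp), List.filter_cons_of_neg (by simp)]
  refine List.filter_congr fun σ hσ => ?_
  have hσa : σ ≠ a := fun h => ha (h ▸ hσ)
  have hσb : σ ≠ b := fun h => hb (h ▸ hσ)
  simp [hσa, hσb]

def signedProd (m : Finset (Fin p) → ℝ) (L : List (Finset (Fin p))) : ℝ :=
  (-1) ^ L.length * (L.map m).prod

theorem signedProd_cons (m : Finset (Fin p) → ℝ) (a : Finset (Fin p)) (L : List (Finset (Fin p))) :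
    signedProd m (a :: L) = -m a * signedProd m L := by
  simp only [signedProd, List.length_cons, List.map_cons, List.prod_cons, pow_succ]
  ring

theorem sum_merges_signedProd (m : Finset (Fin p) → ℝ) {L : List (Finset (Fin p))}
    (hne : ∀ σ ∈ L, σ.Nonempty) (hnd : L.Nodup) :
    ∑ L' ∈ merges I L, signedProd m L' =
      (-1) ^ (L.length + (Dlist I L).length)
        * ((Dlist I L).map fun q => m (q.1 ∪ q.2) - m q.1 * m q.2).prod
        * ((Mlist I L).map m).prod := by
  induction L using merges.induct I with
  | case1 => simp [signedProd]
  | case2 a => simp [signedProd]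
  | case3 a b l hab ih ih' =>
    obtain ⟨-, hnb, hnl⟩ : a.Nonempty ∧ b.Nonempty ∧ ∀ σ ∈ l, σ.Nonempty := by simpa using hne
    obtain ⟨⟨-, hal⟩, hbl, hndl⟩ : (a ≠ b ∧ a ∉ l) ∧ b ∉ l ∧ l.Nodup := by simpa using hnd
    have hbI : ¬b ⊆ I := fun h => by
      obtain ⟨x, hx⟩ := hnb
      exact mem_compl.1 (hab.2 hx) (h hx)
    have hDb : Dlist I (b :: l) = Dlist I l := Dlist_cons_of_not_subset l hbI
    have hD : Dlist I (a :: b :: l) = (a, b) :: Dlist I l := by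
      rw [Dlist_cons_cons_of_pair l hab, hDb]
    have hdisj : Disjoint ((merges I l).image ((a ∪ b) :: ·))
        ((merges I (b :: l)).image (a :: ·)) := by
      simp only [disjoint_left, mem_image]
      rintro _ ⟨L₁, -, rfl⟩ ⟨L₂, -, h⟩
      exact hbI ((union_eq_left.1 (List.cons.inj h).1.symm).trans hab.1)
    rw [merges_cons_cons_of_pair l hab, sum_union hdisj, sum_image (by simp), sum_image (by simp)]
    simp only [signedProd_cons, ← mul_sum]
    rw [ih hnl hndl, ih' (List.forall_mem_cons.2 ⟨hnb, hnl⟩) (List.nodup_cons.2 ⟨hbl, hndl⟩),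
      hDb, hD,
      Mlist_cons_cons_of_Dlist_eq hD hal hbl, Mlist_cons_of_Dlist_eq hDb hbl]
    simp only [List.length_cons, List.map_cons, List.prod_cons]
    ring
  | case4 a b l hab ih =>
    have hD : Dlist I (a :: b :: l) = Dlist I (b :: l) := Dlist_cons_cons_of_not_pair l hab
    rw [merges_cons_cons_of_not_pair l hab, sum_image (by simp)]
    simp only [signedProd_cons, ← mul_sum]
    rw [ih (fun σ hσ => hne σ (List.mem_cons_of_mem _ hσ)) (List.nodup_cons.1 hnd).2, hD,
      Mlist_cons_of_Dlist_eq hD (List.nodup_cons.1 hnd).1]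
    simp only [List.length_cons, List.map_cons, List.prod_cons]
    ring

theorem neg_one_pow_pred {n : ℕ} (hn : n ≠ 0) : (-1 : ℝ) ^ (n - 1) = -(-1) ^ n := by
  obtain ⟨k, rfl⟩ := Nat.exists_eq_succ_of_ne_zero hn
  simp [pow_succ]

def cumulantTerm (m : Finset (Fin p) → ℝ) (L : List (Finset (Fin p))) : ℝ :=
  (-1) ^ (L.length - 1) * (L.map m).prod

def clusterTerm (I : Finset (Fin p)) (m : Finset (Fin p) → ℝ) (L : List (Finset (Fin p))) : ℝ :=
  (-1) ^ (L.length + (Dlist I L).length - 1)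
    * ((Dlist I L).map fun q => m (q.1 ∪ q.2) - m q.1 * m q.2).prod
    * ((Mlist I L).map m).prod

theorem sum_pointedEnumerations_cumulantTerm (m : Finset (Fin p) → ℝ) (z : Fin p)
    (P : Finpartition (univ : Finset (Fin p))) :
    ∑ f ∈ pointedEnumerations z P, cumulantTerm m (ospList P f) =
      (-1) ^ (#P.parts - 1) * ((#P.parts - 1).factorial : ℝ) * ∏ π ∈ P.parts, m π := by
  have hterm : ∀ f : Fin #P.parts ≃ {π // π ∈ P.parts},
      cumulantTerm m (ospList P f) = (-1) ^ (#P.parts - 1) * ∏ π ∈ P.parts, m π := fun f => by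
    rw [cumulantTerm, ospList_length, ← ospList_toFinset f, List.prod_toFinset _ (ospList_nodup f)]
  rw [sum_congr rfl fun f _ => hterm f, sum_const, card_pointedEnumerations, nsmul_eq_mul]
  ring

theorem sum_merges_cumulantTerm (m : Finset (Fin p) → ℝ) {L : List (Finset (Fin p))}
    (hne : ∀ σ ∈ L, σ.Nonempty) (hnd : L.Nodup) (hL : L ≠ []) :
    ∑ L' ∈ merges I L, cumulantTerm m L' = clusterTerm I m L := by
  have hterm : ∀ L' ∈ merges I L, cumulantTerm m L' = -signedProd m L' := fun L' h => by
    rw [cumulantTerm, signedProd,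
      neg_one_pow_pred (List.length_pos_iff.2 (ne_nil_of_mem_merges hL h)).ne', neg_mul]
  rw [sum_congr rfl hterm, sum_neg_distrib, sum_merges_signedProd m hne hnd, clusterTerm,
    neg_one_pow_pred (by simp [hL])]
  ring

theorem headI_subset_of_refines {z : Fin p} (hz : z ∈ I) {L : List (Finset (Fin p))}
    (href : ∀ σ ∈ L, σ ⊆ I ∨ σ ⊆ Iᶜ) (hhead : z ∈ L.headI) : L.headI ⊆ I := by
  cases L with
  | nil => exact empty_subset I
  | cons a l => exact (href a (by simp)).resolve_right fun h => mem_compl.1 (h hhead) hz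

theorem Dlist_ne_nil : ∀ {L : List (Finset (Fin p))}, (∀ σ ∈ L, σ ⊆ I ∨ σ ⊆ Iᶜ) →
    L.headI ⊆ I → (∃ σ ∈ L, ¬σ ⊆ I) → Dlist I L ≠ []
  | [], _, _, ⟨_, hσ, _⟩ => absurd hσ List.not_mem_nil
  | [a], _, ha, ⟨σ, hσ, hσI⟩ => absurd ((List.mem_singleton.1 hσ) ▸ ha) hσI
  | a :: b :: l, href, ha, ⟨σ, hσ, hσI⟩ => by
    rw [List.headI_cons] at ha
    by_cases hb : b ⊆ Iᶜ
    · simp [Dlist_cons_cons_of_pair l ⟨ha, hb⟩]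
    · rw [Dlist_cons_cons_of_not_pair l fun h => hb h.2]
      have hσ' : σ ∈ b :: l := (List.mem_cons.1 hσ).resolve_left fun h => hσI (h ▸ ha)
      exact Dlist_ne_nil (fun τ hτ => href τ (List.mem_cons_of_mem _ hτ))
        ((href b (by simp)).resolve_right hb) ⟨σ, hσ', hσI⟩

end Clusters

end ClusterExpansion

open ClusterExpansion

theorem stmt_16_general (p : ℕ) (hp : 1 ≤ p) (m : Finset (Fin p) → ℝ)
    (I : Finset (Fin p)) (hproper : I ≠ Finset.univ)
    (h1 : (⟨0, hp⟩ : Fin p) ∈ I) :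
    ((∑ P : Finpartition (Finset.univ : Finset (Fin p)),
        (-1 : ℝ) ^ (P.parts.card - 1) * ((P.parts.card - 1).factorial : ℝ)
          * ∏ π ∈ P.parts, m π)
      = ∑ P ∈ Finset.univ.filter
            (fun P : Finpartition (Finset.univ : Finset (Fin p)) =>
              ∀ π ∈ P.parts, π ⊆ I ∨ π ⊆ Iᶜ),
          ∑ f ∈ Finset.univ.filter
              (fun f : Fin P.parts.card ≃ {π // π ∈ P.parts} =>
                ∀ i : Fin P.parts.card,
                  (⟨0, hp⟩ : Fin p) ∈ ((f i : {π // π ∈ P.parts}) : Finset (Fin p))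
                    → (i : ℕ) = 0),
            (-1 : ℝ) ^ (P.parts.card + (Dlist I (ospList P f)).length - 1)
              * ((Dlist I (ospList P f)).map
                  (fun q => m (q.1 ∪ q.2) - m q.1 * m q.2)).prod
              * ((Mlist I (ospList P f)).map m).prod)
    ∧ ∀ P : Finpartition (Finset.univ : Finset (Fin p)),
        (∀ π ∈ P.parts, π ⊆ I ∨ π ⊆ Iᶜ) →
        ∀ f : Fin P.parts.card ≃ {π // π ∈ P.parts},
          (∀ i : Fin P.parts.card,
            (⟨0, hp⟩ : Fin p) ∈ ((f i : {π // π ∈ P.parts}) : Finset (Fin p))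
              → (i : ℕ) = 0) →
          Dlist I (ospList P f) ≠ [] := by
  refine ⟨?_, fun P hP f hf => ?_⟩
  · calc _ = ∑ L ∈ orderedPartitions ⟨0, hp⟩, cumulantTerm m L := by
          rw [← sum_sum_ospList]
          exact sum_congr rfl fun P _ => (sum_pointedEnumerations_cumulantTerm m _ P).symm
      _ = ∑ L ∈ (orderedPartitions ⟨0, hp⟩).filter fun L => ∀ σ ∈ L, σ ⊆ I ∨ σ ⊆ Iᶜ,
            clusterTerm I m L := by
          rw [sum_eq_sum_refining_sum_merges (fun _ => mem_orderedPartitions) h1]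
          refine sum_congr rfl fun L hL => ?_
          have hOP := mem_orderedPartitions.1 (mem_filter.1 hL).1
          exact sum_merges_cumulantTerm m hOP.nonempty hOP.nodup hOP.ne_nil
      _ = _ := by
          rw [← sum_filter_sum_ospList]
          exact sum_congr rfl fun P _ => sum_congr rfl fun f _ => by
            rw [clusterTerm, ospList_length]
  · have href : ∀ σ ∈ ospList P f, σ ⊆ I ∨ σ ⊆ Iᶜ := fun σ hσ => hP σ ((mem_ospList f).1 hσ)
    obtain ⟨x, hx⟩ : ∃ x, x ∉ I := by simpa [eq_univ_iff_forall] using hproper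
    obtain ⟨σ, hσ, hxσ⟩ := P.exists_mem (mem_univ x)
    exact Dlist_ne_nil href
      (headI_subset_of_refines h1 href (isOrderedPartition_ospList f hf).mem_headI)
      ⟨σ, (mem_ospList f).2 hσ, fun h => hx (h hxσ)⟩

/-- Clustering identity for cumulants: for any nonempty proper `I ⊆ {1,…,p}`
containing `1`,
`κ_{{1,…,p}} = Σ_{Π ≺ {I,I^c}} Σ_{τ, τ(1)=1} (−1)^{|Π|+|D(Π,τ)|−1}
  Π_{(σ1,σ2)∈D(Π,τ)} δ_{σ1,σ2} · Π_{σ∈M(Π,τ)} m_σ`,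
where `δ_{I,J} = m_{I∪J} − m_I m_J`; moreover each `D(Π,τ)` is nonempty.
Ordered set partitions are encoded by a partition `P` refining `{I,I^c}`
together with an enumeration of its blocks whose first block contains `1`. -/
theorem stmt_16 (p : ℕ) (hp : 1 ≤ p) (m : Finset (Fin p) → ℝ)
    (I : Finset (Fin p)) (hne : I.Nonempty) (hproper : I ≠ Finset.univ)
    (h1 : (⟨0, hp⟩ : Fin p) ∈ I) :
    ((∑ P : Finpartition (Finset.univ : Finset (Fin p)),
        (-1 : ℝ) ^ (P.parts.card - 1) * ((P.parts.card - 1).factorial : ℝ)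
          * ∏ π ∈ P.parts, m π)
      = ∑ P ∈ Finset.univ.filter
            (fun P : Finpartition (Finset.univ : Finset (Fin p)) =>
              ∀ π ∈ P.parts, π ⊆ I ∨ π ⊆ Iᶜ),
          ∑ f ∈ Finset.univ.filter
              (fun f : Fin P.parts.card ≃ {π // π ∈ P.parts} =>
                ∀ i : Fin P.parts.card,
                  (⟨0, hp⟩ : Fin p) ∈ ((f i : {π // π ∈ P.parts}) : Finset (Fin p))
                    → (i : ℕ) = 0),
            (-1 : ℝ) ^ (P.parts.card + (Dlist I (ospList P f)).length - 1)
              * ((Dlist I (ospList P f)).map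
                  (fun q => m (q.1 ∪ q.2) - m q.1 * m q.2)).prod
              * ((Mlist I (ospList P f)).map m).prod)
    ∧ ∀ P : Finpartition (Finset.univ : Finset (Fin p)),
        (∀ π ∈ P.parts, π ⊆ I ∨ π ⊆ Iᶜ) →
        ∀ f : Fin P.parts.card ≃ {π // π ∈ P.parts},
          (∀ i : Fin P.parts.card,
            (⟨0, hp⟩ : Fin p) ∈ ((f i : {π // π ∈ P.parts}) : Finset (Fin p))
              → (i : ℕ) = 0) →
          Dlist I (ospList P f) ≠ [] :=
  stmt_16_general p hp m I hproper h1
end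

section
/- Every ordered set partition (π_1,…,π_k) of {1,…,p} with 1 ∈ π_1 has a unique 'I-refinement' (π_1∩I, π_1∩I^c, …, π_k∩I, π_k∩I^c) (omitting empty sets), and the pairs (Π,τ) arising as I-refinements are exactly those ordered set partitions in which every block is contained in I or in I^c; moreover, for a given I-refined ordered set partition with l pairs of consecutive blocks lying in I and I^c respectively, exactly 2^l ordered set partitions of {1,…,p} have it as their I-refinement. -/
open Finset

/-- `L` is an ordered set partition of `{1,…,p}`: its blocks are nonempty,
pairwise disjoint, and their union is everything. -/
def isOSP {p : ℕ} (L : List (Finset (Fin p))) : Prop :=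
  (∀ π ∈ L, π.Nonempty) ∧ List.Pairwise (fun π σ => Disjoint π σ) L ∧
    L.foldr (· ∪ ·) ∅ = (Finset.univ : Finset (Fin p))

/-- The element `e` lies in the first block of `L`. -/
def headMem {p : ℕ} (e : Fin p) (L : List (Finset (Fin p))) : Prop :=
  ∃ π, L.head? = some π ∧ e ∈ π

/-- The `I`-refinement of an ordered set partition: each block `π` is replaced
by `π ∩ I, π ∩ I^c`, omitting empty sets. -/
def Irefine {p : ℕ} (I : Finset (Fin p)) (L : List (Finset (Fin p))) :
    List (Finset (Fin p)) :=
  L.flatMap (fun π => [π ∩ I, π ∩ Iᶜ].filter (fun σ => decide σ.Nonempty))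

/-!
Refining a block `π` either leaves it alone (when `π ⊆ I` or `π ⊆ Iᶜ`) or splits it into the
two consecutive blocks `π ∩ I, π ∩ Iᶜ`. Hence the preimages of a refined list `σ :: τ :: M`
are `σ` followed by a preimage of `τ :: M`, together with, when `σ ⊆ I` and `τ ⊆ Iᶜ`, the
merged block `σ ∪ τ` followed by a preimage of `M`. Each such pair `(σ, τ)` therefore doubles
the number of preimages, and the conditions "ordered set partition" and "`1` in the first
block" pass back and forth between a list of nonempty blocks and its refinement.
-/

lemma List.foldr_union_filter_nonempty {α : Type*} [DecidableEq α] (l : List (Finset α))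
    (s : Finset α) :
    (l.filter (fun σ => decide σ.Nonempty)).foldr (· ∪ ·) s = l.foldr (· ∪ ·) s := by
  induction l with
  | nil => rfl
  | cons σ l ih =>
    rcases σ.eq_empty_or_nonempty with rfl | hσ
    · simp [ih]
    · simp [hσ, ih]

lemma Finset.inter_compl_nonempty_iff {α : Type*} [Fintype α] [DecidableEq α] {s t : Finset α} :
    (s ∩ tᶜ).Nonempty ↔ ¬s ⊆ t := by
  simp [Finset.Nonempty, Finset.not_subset]

lemma Finset.inter_nonempty_iff_not_subset_compl {α : Type*} [Fintype α] [DecidableEq α]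
    {s t : Finset α} : (s ∩ t).Nonempty ↔ ¬s ⊆ tᶜ := by
  simpa using inter_compl_nonempty_iff (s := s) (t := tᶜ)

section Refinement

variable {p : ℕ} {I : Finset (Fin p)}

def pieces (I π : Finset (Fin p)) : List (Finset (Fin p)) :=
  [π ∩ I, π ∩ Iᶜ].filter (fun σ => decide σ.Nonempty)

lemma Irefine_cons (π : Finset (Fin p)) (L : List (Finset (Fin p))) :
    Irefine I (π :: L) = pieces I π ++ Irefine I L := rfl

lemma mem_Irefine {σ : Finset (Fin p)} {L : List (Finset (Fin p))} :
    σ ∈ Irefine I L ↔ ∃ π ∈ L, σ ∈ pieces I π :=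
  List.mem_flatMap

lemma mem_pieces {σ π : Finset (Fin p)} :
    σ ∈ pieces I π ↔ (σ = π ∩ I ∨ σ = π ∩ Iᶜ) ∧ σ.Nonempty := by
  simp [pieces]

lemma pieces_of_subset_or_subset_compl {π : Finset (Fin p)} (hπ : π.Nonempty)
    (h : π ⊆ I ∨ π ⊆ Iᶜ) : pieces I π = [π] := by
  rcases h with h | h
  · have : ¬(π ∩ Iᶜ).Nonempty := by rwa [inter_compl_nonempty_iff, not_not]
    simp [pieces, Finset.inter_eq_left.2 h, hπ, this]
  · have : ¬(π ∩ I).Nonempty := by rwa [inter_nonempty_iff_not_subset_compl, not_not]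
    simp [pieces, Finset.inter_eq_left.2 h, hπ, this]

lemma pieces_of_not_subset {π : Finset (Fin p)} (h : ¬π ⊆ I) (h' : ¬π ⊆ Iᶜ) :
    pieces I π = [π ∩ I, π ∩ Iᶜ] := by
  simp [pieces, inter_compl_nonempty_iff.2 h, inter_nonempty_iff_not_subset_compl.2 h']

lemma pieces_union {σ τ : Finset (Fin p)} (hσ : σ.Nonempty) (hτ : τ.Nonempty) (hσI : σ ⊆ I)
    (hτI : τ ⊆ Iᶜ) : pieces I (σ ∪ τ) = [σ, τ] := by
  have hσ' : σ ∩ Iᶜ = ∅ := by rwa [← Finset.disjoint_iff_inter_eq_empty,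
    ← Finset.subset_compl_iff_disjoint_right, compl_compl]
  have hτ' : τ ∩ I = ∅ := by rwa [← Finset.disjoint_iff_inter_eq_empty,
    ← Finset.subset_compl_iff_disjoint_right]
  simp [pieces, Finset.union_inter_distrib_right, Finset.inter_eq_left.2 hσI,
    Finset.inter_eq_left.2 hτI, hσ', hτ', hσ, hτ]

lemma subset_of_mem_pieces {σ π : Finset (Fin p)} (h : σ ∈ pieces I π) : σ ⊆ π := by
  rcases (mem_pieces.1 h).1 with rfl | rfl <;> exact Finset.inter_subset_left

lemma subset_or_subset_compl_of_mem_pieces {σ π : Finset (Fin p)} (h : σ ∈ pieces I π) :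
    σ ⊆ I ∨ σ ⊆ Iᶜ := by
  rcases (mem_pieces.1 h).1 with rfl | rfl
  exacts [.inl Finset.inter_subset_right, .inr Finset.inter_subset_right]

lemma exists_mem_pieces {π : Finset (Fin p)} {x : Fin p} (hx : x ∈ π) :
    ∃ σ ∈ pieces I π, x ∈ σ := by
  by_cases hxI : x ∈ I
  · exact ⟨π ∩ I, mem_pieces.2 ⟨.inl rfl, x, by simp [hx, hxI]⟩, by simp [hx, hxI]⟩
  · exact ⟨π ∩ Iᶜ, mem_pieces.2 ⟨.inr rfl, x, by simp [hx, hxI]⟩, by simp [hx, hxI]⟩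

lemma pieces_ne_nil {π : Finset (Fin p)} (hπ : π.Nonempty) : pieces I π ≠ [] := by
  obtain ⟨x, hx⟩ := hπ
  obtain ⟨σ, hσ, -⟩ := exists_mem_pieces (I := I) hx
  exact List.ne_nil_of_mem hσ

lemma foldr_union_pieces (π s : Finset (Fin p)) :
    (pieces I π).foldr (· ∪ ·) s = π ∪ s := by
  rw [pieces, List.foldr_union_filter_nonempty]
  simp [← Finset.union_assoc, ← Finset.inter_union_distrib_left]

lemma pairwise_disjoint_pieces (π : Finset (Fin p)) : (pieces I π).Pairwise Disjoint :=
  List.Pairwise.filter _ <| by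
    simpa using disjoint_compl_right.mono Finset.inter_subset_right Finset.inter_subset_right

lemma pairwise_disjoint_Irefine_iff {L : List (Finset (Fin p))} :
    (Irefine I L).Pairwise Disjoint ↔ L.Pairwise Disjoint := by
  rw [Irefine, List.pairwise_flatMap]
  refine ⟨fun h => h.2.imp fun hπσ => Finset.disjoint_left.2 fun x hxπ hxσ => ?_,
    fun h => ⟨fun π _ => pairwise_disjoint_pieces π, h.imp fun hπσ _ hx _ hy =>
      hπσ.mono (subset_of_mem_pieces hx) (subset_of_mem_pieces hy)⟩⟩
  obtain ⟨ρ, hρ, hxρ⟩ := exists_mem_pieces (I := I) hxπ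
  obtain ⟨ρ', hρ', hxρ'⟩ := exists_mem_pieces (I := I) hxσ
  exact Finset.disjoint_left.1 (hπσ ρ hρ ρ' hρ') hxρ hxρ'

lemma foldr_union_Irefine (L : List (Finset (Fin p))) :
    (Irefine I L).foldr (· ∪ ·) ∅ = L.foldr (· ∪ ·) ∅ := by
  induction L with
  | nil => rfl
  | cons π L ih => rw [Irefine_cons, List.foldr_append, ih, foldr_union_pieces]; rfl

lemma isOSP_Irefine_iff {L : List (Finset (Fin p))} (hL : ∀ π ∈ L, π.Nonempty) :
    isOSP (Irefine I L) ↔ isOSP L := by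
  have hne : ∀ σ ∈ Irefine I L, σ.Nonempty := fun σ hσ => by
    obtain ⟨π, -, hσπ⟩ := mem_Irefine.1 hσ
    exact (mem_pieces.1 hσπ).2
  simp only [isOSP, pairwise_disjoint_Irefine_iff, foldr_union_Irefine]
  exact and_congr (iff_of_true hne hL) Iff.rfl

lemma headMem_Irefine {e : Fin p} {L : List (Finset (Fin p))} (he : e ∈ I)
    (h : headMem e L) : headMem e (Irefine I L) := by
  obtain ⟨π, hπ, heπ⟩ := h
  obtain _ | ⟨π', L⟩ := L
  · cases hπ
  obtain rfl : π = π' := (Option.some.inj hπ).symm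
  have : (π ∩ I).Nonempty := ⟨e, Finset.mem_inter.2 ⟨heπ, he⟩⟩
  exact ⟨π ∩ I, by simp [Irefine_cons, pieces, this], Finset.mem_inter.2 ⟨heπ, he⟩⟩

lemma headMem_of_headMem_Irefine {e : Fin p} {L : List (Finset (Fin p))}
    (hL : ∀ π ∈ L, π.Nonempty) (h : headMem e (Irefine I L)) : headMem e L := by
  obtain ⟨σ, hσ, heσ⟩ := h
  obtain _ | ⟨π, L⟩ := L
  · cases hσ
  obtain ⟨τ, ρs, hτ⟩ :=
    List.exists_cons_of_ne_nil (pieces_ne_nil (I := I) (hL π List.mem_cons_self))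
  rw [Irefine_cons, hτ, List.cons_append, List.head?_cons] at hσ
  obtain rfl := Option.some.inj hσ
  exact ⟨π, rfl, subset_of_mem_pieces (hτ ▸ List.mem_cons_self) heσ⟩

lemma Irefine_eq_self {M : List (Finset (Fin p))}
    (hM : ∀ σ ∈ M, σ.Nonempty ∧ (σ ⊆ I ∨ σ ⊆ Iᶜ)) : Irefine I M = M := by
  induction M with
  | nil => rfl
  | cons σ M ih =>
    rw [List.forall_mem_cons] at hM
    rw [Irefine_cons, pieces_of_subset_or_subset_compl hM.1.1 hM.1.2, ih hM.2]
    rfl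

lemma Irefine_cons_eq_cons {π σ : Finset (Fin p)} {L M : List (Finset (Fin p))}
    (hπ : π.Nonempty) (h : Irefine I (π :: L) = σ :: M) :
    π = σ ∧ Irefine I L = M ∨
      σ = π ∩ I ∧ M = (π ∩ Iᶜ) :: Irefine I L := by
  rw [Irefine_cons] at h
  by_cases hπI : π ⊆ I ∨ π ⊆ Iᶜ
  · rw [pieces_of_subset_or_subset_compl hπ hπI] at h
    exact .inl (List.cons.inj h)
  · push Not at hπI
    rw [pieces_of_not_subset hπI.1 hπI.2] at h
    simp only [List.cons_append, List.cons.injEq, List.nil_append] at h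
    exact .inr ⟨h.1.symm, h.2.symm⟩

def preimages (I : Finset (Fin p)) (M : List (Finset (Fin p))) :
    Set (List (Finset (Fin p))) :=
  {L | (∀ π ∈ L, π.Nonempty) ∧ Irefine I L = M}

lemma preimages_nil : preimages I [] = {[]} := by
  ext L
  refine ⟨fun ⟨hL, h⟩ => ?_, by rintro rfl; exact ⟨by simp, rfl⟩⟩
  rw [Irefine, List.flatMap_eq_nil_iff] at h
  exact List.eq_nil_iff_forall_not_mem.2 fun π hπ => pieces_ne_nil (hL π hπ) (h π hπ)

lemma preimages_cons {σ : Finset (Fin p)} {M : List (Finset (Fin p))} (hσ : σ.Nonempty)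
    (hσI : σ ⊆ I ∨ σ ⊆ Iᶜ) (hmerge : ∀ τ ∈ M.head?, ¬(σ ⊆ I ∧ τ ⊆ Iᶜ)) :
    preimages I (σ :: M) = (σ :: ·) '' preimages I M := by
  ext L
  constructor
  · rintro ⟨hL, hLM⟩
    obtain _ | ⟨π, L⟩ := L
    · cases hLM
    rw [List.forall_mem_cons] at hL
    rcases Irefine_cons_eq_cons hL.1 hLM with ⟨rfl, hLM'⟩ | ⟨rfl, rfl⟩
    · exact ⟨L, ⟨hL.2, hLM'⟩, rfl⟩
    · exact absurd ⟨Finset.inter_subset_right, Finset.inter_subset_right⟩ (hmerge _ rfl)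
  · rintro ⟨L, ⟨hL, rfl⟩, rfl⟩
    refine ⟨List.forall_mem_cons.2 ⟨hσ, hL⟩, ?_⟩
    rw [Irefine_cons, pieces_of_subset_or_subset_compl hσ hσI]
    rfl

lemma preimages_cons_cons {σ τ : Finset (Fin p)} {M : List (Finset (Fin p))}
    (hσ : σ.Nonempty) (hτ : τ.Nonempty) (hσI : σ ⊆ I) (hτI : τ ⊆ Iᶜ) :
    preimages I (σ :: τ :: M) =
      (σ :: ·) '' preimages I (τ :: M) ∪ ((σ ∪ τ) :: ·) '' preimages I M := by
  ext L
  constructor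
  · rintro ⟨hL, hLM⟩
    obtain _ | ⟨π, L⟩ := L
    · cases hLM
    rw [List.forall_mem_cons] at hL
    rcases Irefine_cons_eq_cons hL.1 hLM with ⟨rfl, hLM'⟩ | ⟨rfl, hLM'⟩
    · exact .inl ⟨L, ⟨hL.2, hLM'⟩, rfl⟩
    · obtain ⟨rfl, hML⟩ := List.cons.inj hLM'
      refine .inr ⟨L, ⟨hL.2, hML.symm⟩, ?_⟩
      simp [← Finset.inter_union_distrib_left]
  · rintro (⟨L, ⟨hL, hLM⟩, rfl⟩ | ⟨L, ⟨hL, hLM⟩, rfl⟩)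
    · refine ⟨List.forall_mem_cons.2 ⟨hσ, hL⟩, ?_⟩
      rw [Irefine_cons, pieces_of_subset_or_subset_compl hσ (.inl hσI), hLM]
      rfl
    · refine ⟨List.forall_mem_cons.2 ⟨hσ.mono Finset.subset_union_left, hL⟩, ?_⟩
      rw [Irefine_cons, pieces_union hσ hτ hσI hτI, hLM]
      rfl

lemma Dlist_cons_cons (σ τ : Finset (Fin p)) (M : List (Finset (Fin p))) :
    Dlist I (σ :: τ :: M) =
      if σ ⊆ I ∧ τ ⊆ Iᶜ then (σ, τ) :: Dlist I (τ :: M) else Dlist I (τ :: M) := by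
  simp only [Dlist, List.tail_cons, List.zip_cons_cons, List.filter_cons, decide_eq_true_eq]

lemma Dlist_cons_of_subset_compl {τ : Finset (Fin p)} {M : List (Finset (Fin p))}
    (hτ : τ.Nonempty) (hτI : τ ⊆ Iᶜ) : Dlist I (τ :: M) = Dlist I M := by
  obtain _ | ⟨ρ, M⟩ := M
  · rfl
  have : ¬τ ⊆ I := fun h => by
    obtain ⟨x, hx⟩ := hτ
    exact Finset.mem_compl.1 (hτI hx) (h hx)
  rw [Dlist_cons_cons, if_neg (fun h => this h.1)]

theorem encard_preimages : ∀ {M : List (Finset (Fin p))},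
    (∀ σ ∈ M, σ.Nonempty ∧ (σ ⊆ I ∨ σ ⊆ Iᶜ)) →
      (preimages I M).encard = 2 ^ (Dlist I M).length
  | [], _ => by simp [preimages_nil, Dlist]
  | [σ], hM => by
    rw [List.forall_mem_singleton] at hM
    rw [preimages_cons hM.1 hM.2 (by simp), List.cons_injective.encard_image,
      encard_preimages (M := []) (by simp)]
    rfl
  | σ :: τ :: M, hM => by
    have ihτ := encard_preimages (List.forall_mem_cons.1 hM).2
    simp only [List.forall_mem_cons] at hM
    obtain ⟨⟨hσ, hσs⟩, ⟨hτ, -⟩, hM⟩ := hM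
    rw [Dlist_cons_cons]
    split_ifs with hmerge
    · obtain ⟨hσI, hτI⟩ := hmerge
      have hστ : σ ∪ τ ≠ σ := fun h => by
        obtain ⟨x, hx⟩ := hτ
        exact Finset.mem_compl.1 (hτI hx) (hσI (h ▸ Finset.mem_union_right σ hx))
      rw [preimages_cons_cons hσ hτ hσI hτI, Set.encard_union_eq,
        List.cons_injective.encard_image, List.cons_injective.encard_image, ihτ,
        encard_preimages hM, Dlist_cons_of_subset_compl hτ hτI, List.length_cons, pow_succ, mul_two]
      exact Set.disjoint_left.2 fun _ ⟨_, _, h₁⟩ ⟨_, _, h₂⟩ =>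
        hστ (List.cons.inj (h₂.trans h₁.symm)).1
    · rw [preimages_cons hσ hσs (by simpa using hmerge), List.cons_injective.encard_image, ihτ]

lemma ncard_preimages {M : List (Finset (Fin p))}
    (hM : ∀ σ ∈ M, σ.Nonempty ∧ (σ ⊆ I ∨ σ ⊆ Iᶜ)) :
    (preimages I M).ncard = 2 ^ (Dlist I M).length := by
  rw [Set.ncard_def, encard_preimages hM]
  norm_cast

lemma setOf_isOSP_headMem_Irefine_eq {e : Fin p} {M : List (Finset (Fin p))} (hM : isOSP M)
    (he : headMem e M) :
    {L | isOSP L ∧ headMem e L ∧ Irefine I L = M} = preimages I M := by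
  ext L
  refine ⟨fun ⟨hL, _, hLM⟩ => ⟨hL.1, hLM⟩, ?_⟩
  rintro ⟨hL, rfl⟩
  exact ⟨(isOSP_Irefine_iff hL).1 hM, headMem_of_headMem_Irefine hL he, rfl⟩

end Refinement

theorem stmt_17_general (p : ℕ) (hp : 1 ≤ p) (I : Finset (Fin p))
    (h1 : (⟨0, hp⟩ : Fin p) ∈ I) :
    (∀ L : List (Finset (Fin p)), isOSP L → headMem ⟨0, hp⟩ L →
        isOSP (Irefine I L) ∧ headMem ⟨0, hp⟩ (Irefine I L) ∧
          ∀ σ ∈ Irefine I L, σ ⊆ I ∨ σ ⊆ Iᶜ)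
    ∧ (∀ M : List (Finset (Fin p)),
        (isOSP M ∧ headMem ⟨0, hp⟩ M ∧ ∀ σ ∈ M, σ ⊆ I ∨ σ ⊆ Iᶜ)
          ↔ ∃ L, isOSP L ∧ headMem ⟨0, hp⟩ L ∧ Irefine I L = M)
    ∧ (∀ M : List (Finset (Fin p)),
        isOSP M → headMem ⟨0, hp⟩ M → (∀ σ ∈ M, σ ⊆ I ∨ σ ⊆ Iᶜ) →
          Set.ncard {L : List (Finset (Fin p)) |
              isOSP L ∧ headMem ⟨0, hp⟩ L ∧ Irefine I L = M}
            = 2 ^ (Dlist I M).length) := by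
  have refine_spec : ∀ L : List (Finset (Fin p)), isOSP L → headMem ⟨0, hp⟩ L →
      isOSP (Irefine I L) ∧ headMem ⟨0, hp⟩ (Irefine I L) ∧
        ∀ σ ∈ Irefine I L, σ ⊆ I ∨ σ ⊆ Iᶜ := fun L hL h0 =>
    ⟨(isOSP_Irefine_iff hL.1).2 hL, headMem_Irefine h1 h0, fun σ hσ =>
      have ⟨_, _, hσπ⟩ := mem_Irefine.1 hσ
      subset_or_subset_compl_of_mem_pieces hσπ⟩
  refine ⟨refine_spec, fun M => ⟨fun ⟨hM, h0, hMI⟩ => ?_, ?_⟩, fun M hM h0 hMI => ?_⟩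
  · exact ⟨M, hM, h0, Irefine_eq_self fun σ hσ => ⟨hM.1 σ hσ, hMI σ hσ⟩⟩
  · rintro ⟨L, hL, h0, rfl⟩
    exact refine_spec L hL h0
  · rw [setOf_isOSP_headMem_Irefine_eq hM h0]
    exact ncard_preimages fun σ hσ => ⟨hM.1 σ hσ, hMI σ hσ⟩

/-- Every ordered set partition of `{1,…,p}` whose first block contains `1` has
a (unique, since `Irefine` is a function) `I`-refinement which is again an
ordered set partition with first block containing `1` and all blocks contained
in `I` or `I^c`; the `I`-refinements arising this way are exactly such ordered
set partitions; and an `I`-refined ordered set partition with `l` consecutive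
pairs of blocks lying in `I` and `I^c` respectively has exactly `2^l`
preimages. -/
theorem stmt_17 (p : ℕ) (hp : 1 ≤ p) (I : Finset (Fin p))
    (hne : I.Nonempty) (hproper : I ≠ Finset.univ) (h1 : (⟨0, hp⟩ : Fin p) ∈ I) :
    (∀ L : List (Finset (Fin p)), isOSP L → headMem ⟨0, hp⟩ L →
        isOSP (Irefine I L) ∧ headMem ⟨0, hp⟩ (Irefine I L) ∧
          ∀ σ ∈ Irefine I L, σ ⊆ I ∨ σ ⊆ Iᶜ)
    ∧ (∀ M : List (Finset (Fin p)),
        (isOSP M ∧ headMem ⟨0, hp⟩ M ∧ ∀ σ ∈ M, σ ⊆ I ∨ σ ⊆ Iᶜ)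
          ↔ ∃ L, isOSP L ∧ headMem ⟨0, hp⟩ L ∧ Irefine I L = M)
    ∧ (∀ M : List (Finset (Fin p)),
        isOSP M → headMem ⟨0, hp⟩ M → (∀ σ ∈ M, σ ⊆ I ∨ σ ⊆ Iᶜ) →
          Set.ncard {L : List (Finset (Fin p)) |
              isOSP L ∧ headMem ⟨0, hp⟩ L ∧ Irefine I L = M}
            = 2 ^ (Dlist I M).length) :=
  stmt_17_general p hp I h1
end
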